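/- arXiv:math/0302095 — 8 statements merged into one kernel-verified Lean document; each statement's English description precedes it below -/
import Mathlib

section
/- Let G be a locally compact group and α an automorphism of G such that U_α = G, i.e. α^n(x) → e for every x ∈ G. Then α is compactly contractive: for every compact subset C of G and every neighborhood O of the identity e, there exists N such that α^n(C) ⊆ O for all n ≥ N. -/
open Filter Topology Pointwise

theorem stmt0 {G : Type*} [Group G] [TopologicalSpace G] [IsTopologicalGroup G]
    [LocallyCompactSpace G]
    (α : MulAut G) (hc : Continuous α) (hc' : Continuous (α⁻¹ : MulAut G))
    (hU : ∀ x : G, Tendsto (fun n : ℕ => (α ^ n) x) atTop (𝓝 1)) :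
    ∀ C : Set G, IsCompact C → ∀ O ∈ 𝓝 (1 : G), ∃ N : ℕ, ∀ n ≥ N, ∀ c ∈ C, (α ^ n) c ∈ O := by
  classical
  -- continuity of iterates
  have contPow : ∀ n : ℕ, Continuous fun x : G => (α ^ n) x := by
    intro n
    induction n with
    | zero => simpa using continuous_id'
    | succ n ih =>
      have : (fun x : G => (α ^ (n + 1)) x) = fun x => (α ^ n) (α x) := by
        funext x
        rw [pow_succ]
        rfl
      rw [this]
      exact ih.comp hc
  intro C hC O hO
  -- choose a closed nbhd K of 1 with k1 * (k2⁻¹ * k3) ∈ O for k_i ∈ K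
  obtain ⟨U₁, hU₁, hU₁O⟩ := exists_nhds_one_split hO
  obtain ⟨U₂, hU₂, hU₂U₁⟩ := exists_nhds_one_split hU₁
  have hV : U₂ ∩ U₂⁻¹ ∈ 𝓝 (1 : G) := by
    refine Filter.inter_mem hU₂ ?_
    simpa using inv_mem_nhds_one G hU₂
  obtain ⟨K, hKmem, hKclosed, hKsub⟩ := exists_mem_nhds_isClosed_subset hV
  have hsplit : ∀ k1 k2 k3 : G, k1 ∈ K → k2 ∈ K → k3 ∈ K → k1 * (k2⁻¹ * k3) ∈ O := by
    intro k1 k2 k3 h1 h2 h3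
    have h1' : k1 ∈ U₂ := (hKsub h1).1
    have h2' : k2⁻¹ ∈ U₂ := by
      have := (hKsub h2).2
      simpa using this
    have h3' : k3 ∈ U₂ := (hKsub h3).1
    have h1e : (1 : G) ∈ U₂ := mem_of_mem_nhds hU₂
    have hk1 : k1 ∈ U₁ := by simpa using hU₂U₁ k1 h1' 1 h1e
    exact hU₁O k1 hk1 _ (hU₂U₁ _ h2' _ h3')
  -- pointwise eventual membership in K
  have hN : ∀ x : G, ∃ N : ℕ, ∀ m ≥ N, (α ^ m) x ∈ K := by
    intro x
    rcases (eventually_atTop).1 ((hU x).eventually_mem hKmem) with ⟨N, hN⟩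
    exact ⟨N, hN⟩
  -- Baire argument
  set A : ℕ → Set G := fun n => {x | ∀ m ≥ n, (α ^ m) x ∈ K} with hA
  have hAclosed : ∀ n, IsClosed (A n) := by
    intro n
    have : A n = ⋂ m, ⋂ _ : m ≥ n, (fun x : G => (α ^ m) x) ⁻¹' K := by
      ext x; simp [hA]
    rw [this]
    exact isClosed_iInter fun m => isClosed_iInter fun _ => hKclosed.preimage (contPow m)
  have hAcover : (⋃ n, A n) = Set.univ := by
    ext x
    simp only [Set.mem_iUnion, Set.mem_univ, iff_true]
    exact hN x
  obtain ⟨n₀, hn₀⟩ := nonempty_interior_of_iUnion_of_closed hAclosed hAcover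
  obtain ⟨x₀, hx₀⟩ := hn₀
  -- U is a neighborhood of 1 with x₀ * y ∈ A n₀ for y ∈ U
  set U : Set G := (fun y : G => x₀ * y) ⁻¹' interior (A n₀) with hUdef
  have hUnhds : U ∈ 𝓝 (1 : G) := by
    have : Continuous fun y : G => x₀ * y := continuous_const.mul continuous_id
    have hop : IsOpen U := isOpen_interior.preimage this
    refine hop.mem_nhds ?_
    simpa [hUdef] using hx₀
  have hx₀A : x₀ ∈ A n₀ := interior_subset hx₀
  have hUprop : ∀ y ∈ U, ∀ m ≥ n₀, (α ^ m) y ∈ (fun k => ((α ^ m) x₀)⁻¹ * k) '' K ∧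
      (α ^ m) (x₀ * y) ∈ K := by
    intro y hy m hm
    have h1 : x₀ * y ∈ A n₀ := interior_subset hy
    refine ⟨⟨(α ^ m) (x₀ * y), h1 m hm, ?_⟩, h1 m hm⟩
    rw [map_mul]
    group
  -- cover C by finitely many translates c • U
  have hWn : ∀ c ∈ C, (fun z : G => c⁻¹ * z) ⁻¹' U ∈ 𝓝 c := by
    intro c _
    have hcont : Continuous fun z : G => c⁻¹ * z := continuous_const.mul continuous_id
    have : Tendsto (fun z : G => c⁻¹ * z) (𝓝 c) (𝓝 1) := by
      have := hcont.tendsto c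
      simpa using this
    exact this hUnhds
  obtain ⟨t, htC, htcov⟩ := hC.elim_nhds_subcover (fun c => (fun z : G => c⁻¹ * z) ⁻¹' U) hWn
  -- choose uniform N
  let f : G → ℕ := fun c => Classical.choose (hN c)
  have hf : ∀ c : G, ∀ m ≥ f c, (α ^ m) c ∈ K := fun c => Classical.choose_spec (hN c)
  refine ⟨max n₀ (t.sup f), ?_⟩
  intro n hn z hz
  obtain ⟨c, hct, hcz⟩ := Set.mem_iUnion₂.1 (htcov hz)
  have hy : c⁻¹ * z ∈ U := hcz
  have hn₀' : n ≥ n₀ := le_trans (le_max_left _ _) hn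
  have hnc : n ≥ f c := le_trans (le_trans (Finset.le_sup hct) (le_max_right _ _)) hn
  have hk1 : (α ^ n) c ∈ K := hf c n hnc
  have hk2 : (α ^ n) x₀ ∈ K := hx₀A n hn₀'
  have hk3 : (α ^ n) (x₀ * (c⁻¹ * z)) ∈ K := (hUprop _ hy n hn₀').2
  have key : (α ^ n) z = (α ^ n) c * (((α ^ n) x₀)⁻¹ * (α ^ n) (x₀ * (c⁻¹ * z))) := by
    simp [map_mul, map_inv, mul_assoc]
  rw [key]
  exact hsplit _ _ _ hk1 hk2 hk3
end

section
/- Let G be a locally compact group and d, v ∈ G elements with dv = vd and such that the subgroup generated by v has compact closure. Then U_{dv} = U_d and P_{dv} = P_d, where subscripts denote conjugation by the indicated element. -/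
open Filter Topology Pointwise

section
variable {G : Type*} [Group G] [TopologicalSpace G] [IsTopologicalGroup G]

lemma conj_tendsto {K : Set G} (hK : IsCompact K) {c y : ℕ → G} (hc : ∀ n, c n ∈ K)
    (hy : Tendsto y atTop (𝓝 1)) :
    Tendsto (fun n => c n * y n * (c n)⁻¹) atTop (𝓝 1) := by
  rw [(nhds_basis_opens (1 : G)).tendsto_right_iff]
  rintro V ⟨hV1, hVo⟩
  have hΩ : IsOpen {p : G × G | p.1 * p.2 * p.1⁻¹ ∈ V} := by
    apply hVo.preimage; fun_prop
  have hsub : K ×ˢ ({1} : Set G) ⊆ {p : G × G | p.1 * p.2 * p.1⁻¹ ∈ V} := by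
    rintro ⟨k, o⟩ ⟨hk, ho⟩
    simp only [Set.mem_singleton_iff] at ho
    simp [Set.mem_setOf_eq, ho, hV1]
  obtain ⟨u, w, hu, hw, hKu, h1w, huw⟩ :=
    generalized_tube_lemma hK isCompact_singleton hΩ hsub
  filter_upwards [hy (hw.mem_nhds (h1w rfl))] with n hn
  exact huw (show (c n, y n) ∈ u ×ˢ w from ⟨hKu (hc n), hn⟩)

lemma keyU (d v : G) (hc : d * v = v * d)
    (hv : IsCompact (closure (Subgroup.zpowers v : Set G))) (x : G)
    (hx : Tendsto (fun n : ℕ => d ^ n * x * (d ^ n)⁻¹) atTop (𝓝 1)) :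
    Tendsto (fun n : ℕ => (d * v) ^ n * x * ((d * v) ^ n)⁻¹) atTop (𝓝 1) := by
  have hcm : Commute d v := hc
  have heq : ∀ n : ℕ, (d * v) ^ n * x * ((d * v) ^ n)⁻¹
      = v ^ n * (d ^ n * x * (d ^ n)⁻¹) * (v ^ n)⁻¹ := by
    intro n
    rw [hcm.mul_pow, (hcm.pow_pow n n).eq]
    group
  simp only [heq]
  exact conj_tendsto hv (fun n => subset_closure (SetLike.mem_coe.2 (Subgroup.pow_mem _ (Subgroup.mem_zpowers v) n))) hx

lemma keyP (d v : G) (hc : d * v = v * d)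
    (hv : IsCompact (closure (Subgroup.zpowers v : Set G))) (x : G)
    (hx : IsCompact (closure (Set.range fun n : ℕ => d ^ n * x * (d ^ n)⁻¹))) :
    IsCompact (closure (Set.range fun n : ℕ => (d * v) ^ n * x * ((d * v) ^ n)⁻¹)) := by
  have hcm : Commute d v := hc
  set K : Set G := closure (Subgroup.zpowers v : Set G)
  set S : Set G := closure (Set.range fun n : ℕ => d ^ n * x * (d ^ n)⁻¹)
  have hbig : IsCompact (K * S * K) := (hv.mul hx).mul hv
  have hmem : ∀ n : ℕ, v ^ n ∈ K := fun n =>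
    subset_closure (SetLike.mem_coe.2 (Subgroup.pow_mem _ (Subgroup.mem_zpowers v) n))
  have hmem' : ∀ n : ℕ, (v ^ n)⁻¹ ∈ K := fun n =>
    subset_closure (SetLike.mem_coe.2 (Subgroup.inv_mem _ (Subgroup.pow_mem _ (Subgroup.mem_zpowers v) n)))
  have hsub : (Set.range fun n : ℕ => (d * v) ^ n * x * ((d * v) ^ n)⁻¹) ⊆ K * S * K := by
    rintro _ ⟨n, rfl⟩
    have heq : (d * v) ^ n * x * ((d * v) ^ n)⁻¹
        = v ^ n * (d ^ n * x * (d ^ n)⁻¹) * (v ^ n)⁻¹ := by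
      rw [hcm.mul_pow, (hcm.pow_pow n n).eq]; group
    show (d * v) ^ n * x * ((d * v) ^ n)⁻¹ ∈ K * S * K
    rw [heq]
    exact Set.mul_mem_mul (Set.mul_mem_mul (hmem n)
      (subset_closure ⟨n, rfl⟩)) (hmem' n)
  exact hbig.closure.of_isClosed_subset isClosed_closure
    (closure_mono hsub)

end

theorem stmt2 {G : Type*} [Group G] [TopologicalSpace G] [IsTopologicalGroup G]
    [LocallyCompactSpace G]
    (d v : G) (hcomm : d * v = v * d)
    (hv : IsCompact (closure (Subgroup.zpowers v : Set G)))
    (U P : G → Set G)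
    (hUdef : ∀ g : G,
      U g = {x : G | Tendsto (fun n : ℕ => g ^ n * x * (g ^ n)⁻¹) atTop (𝓝 1)})
    (hPdef : ∀ g : G,
      P g = {x : G | IsCompact (closure (Set.range fun n : ℕ => g ^ n * x * (g ^ n)⁻¹))}) :
    U (d * v) = U d ∧ P (d * v) = P d := by
  have hcm : Commute d v := hcomm
  have hcomm' : (d * v) * v⁻¹ = v⁻¹ * (d * v) := by
    rw [mul_inv_cancel_right, hcomm, ← mul_assoc, inv_mul_cancel, one_mul]
  have hv' : IsCompact (closure (Subgroup.zpowers v⁻¹ : Set G)) := by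
    rwa [Subgroup.zpowers_inv]
  have hd : (d * v) * v⁻¹ = d := mul_inv_cancel_right d v
  constructor
  · simp only [hUdef]
    apply Set.Subset.antisymm
    · intro x hx
      have := keyU (d * v) v⁻¹ hcomm' hv' x hx
      rwa [hd] at this
    · intro x hx
      exact keyU d v hcomm hv x hx
  · simp only [hPdef]
    apply Set.Subset.antisymm
    · intro x hx
      have := keyP (d * v) v⁻¹ hcomm' hv' x hx
      rwa [hd] at this
    · intro x hx
      exact keyP d v hcomm hv x hx
end

section
/- Let p : G → Ḡ be a perfect (continuous, closed, with compact fibers) surjective homomorphism of locally compact groups, and let α be an automorphism of G stabilizing ker p, inducing ᾱ on Ḡ. Then p⁻¹(P_ᾱ) = P_α and p⁻¹(M_ᾱ) = M_α; in particular p(P_α) = P_ᾱ and p(M_α) = M_ᾱ. -/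
open Filter Topology Pointwise

theorem stmt9 {G H : Type*} [Group G] [TopologicalSpace G] [IsTopologicalGroup G]
    [LocallyCompactSpace G]
    [Group H] [TopologicalSpace H] [IsTopologicalGroup H] [LocallyCompactSpace H]
    (p : G →* H) (hpc : Continuous p) (hpcl : IsClosedMap p)
    (hpf : ∀ y : H, IsCompact (p ⁻¹' {y})) (hps : Function.Surjective p)
    (α : MulAut G) (hc : Continuous α) (hc' : Continuous (α⁻¹ : MulAut G))
    (β : MulAut H) (hcβ : Continuous β) (hcβ' : Continuous (β⁻¹ : MulAut H))
    (hker : (MonoidHom.ker p).map α.toMonoidHom = MonoidHom.ker p)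
    (hcomp : ∀ x : G, p (α x) = β (p x))
    (PG : MulAut G → Set G)
    (hPG : ∀ γ : MulAut G, PG γ = {x : G | IsCompact (closure (Set.range fun n : ℕ => (γ ^ n) x))})
    (PH : MulAut H → Set H)
    (hPH : ∀ γ : MulAut H, PH γ = {y : H | IsCompact (closure (Set.range fun n : ℕ => (γ ^ n) y))}) :
    p ⁻¹' (PH β) = PG α ∧ p ⁻¹' (PH β ∩ PH β⁻¹) = PG α ∩ PG α⁻¹ ∧
      p '' (PG α) = PH β ∧ p '' (PG α ∩ PG α⁻¹) = PH β ∩ PH β⁻¹ := by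
  have hproper : IsProperMap p :=
    isProperMap_iff_isClosedMap_and_compact_fibers.mpr ⟨hpc, hpcl, hpf⟩
  have key : ∀ (γ : MulAut G) (δ : MulAut H), (∀ x, p (γ x) = δ (p x)) →
      p ⁻¹' (PH δ) = PG γ := by
    intro γ δ hcd
    have hn : ∀ (n : ℕ) (x : G), p ((γ ^ n) x) = (δ ^ n) (p x) := by
      intro n
      induction n with
      | zero => intro x; simp
      | succ n ih =>
        intro x
        rw [pow_succ', pow_succ', MulAut.mul_apply, MulAut.mul_apply, hcd, ih]
    ext x
    rw [hPG, hPH]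
    simp only [Set.mem_preimage, Set.mem_setOf_eq]
    constructor
    · intro hK
      have hsub : Set.range (fun n : ℕ => (γ ^ n) x) ⊆
          p ⁻¹' (closure (Set.range fun n : ℕ => (δ ^ n) (p x))) := by
        rintro _ ⟨n, rfl⟩
        exact Set.mem_preimage.mpr (subset_closure ⟨n, (hn n x).symm⟩)
      exact (hproper.isCompact_preimage hK).of_isClosed_subset isClosed_closure
        (closure_minimal hsub (isClosed_closure.preimage hpc))
    · intro hK
      have hsub : Set.range (fun n : ℕ => (δ ^ n) (p x)) ⊆
          p '' (closure (Set.range fun n : ℕ => (γ ^ n) x)) := by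
        rintro _ ⟨n, rfl⟩
        exact ⟨(γ ^ n) x, subset_closure ⟨n, rfl⟩, hn n x⟩
      exact (hK.image hpc).of_isClosed_subset isClosed_closure
        (closure_minimal hsub (hpcl _ isClosed_closure))
  have hcomp' : ∀ x : G, p ((α⁻¹ : MulAut G) x) = (β⁻¹ : MulAut H) (p x) := by
    intro x
    have h1 := hcomp ((α⁻¹ : MulAut G) x)
    rw [MulAut.apply_inv_self] at h1
    rw [h1, MulAut.inv_apply_self]
  have h1 : p ⁻¹' (PH β) = PG α := key α β hcomp
  have h2 : p ⁻¹' (PH β⁻¹) = PG α⁻¹ := key α⁻¹ β⁻¹ hcomp'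
  have h3 : p ⁻¹' (PH β ∩ PH β⁻¹) = PG α ∩ PG α⁻¹ := by
    rw [Set.preimage_inter, h1, h2]
  refine ⟨h1, h3, ?_, ?_⟩
  · rw [← h1, Set.image_preimage_eq _ hps]
  · rw [← h3, Set.image_preimage_eq _ hps]
end

section
/- Let α be an automorphism of a totally disconnected locally compact group G and V a compact open subgroup of G. Then U_α ⊆ V_{--}, where V_{--} := ⋃_{n≥0} α^{-n}(V_-) and V_- := ⋂_{n≥0} α^{-n}(V). -/
open Filter Topology Pointwise

theorem stmt10 {G : Type*} [Group G] [TopologicalSpace G] [IsTopologicalGroup G]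
    [LocallyCompactSpace G] [TotallyDisconnectedSpace G]
    (α : MulAut G) (hc : Continuous α) (hc' : Continuous (α⁻¹ : MulAut G))
    (V : Subgroup G) (hVc : IsCompact (V : Set G)) (hVo : IsOpen (V : Set G))
    (Vm Vmm : Set G)
    (hVm : Vm = {x : G | ∀ n : ℕ, (α ^ n) x ∈ V})
    (hVmm : Vmm = ⋃ n : ℕ, (fun x : G => (α ^ n) x) ⁻¹' Vm) :
    {x : G | Tendsto (fun n : ℕ => (α ^ n) x) atTop (𝓝 1)} ⊆ Vmm := by
  intro x hx
  have hV1 : (V : Set G) ∈ 𝓝 (1 : G) := hVo.mem_nhds V.one_mem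
  obtain ⟨N, hN⟩ := (hx.eventually_mem hV1).exists_forall_of_atTop
  subst hVmm hVm
  refine Set.mem_iUnion.2 ⟨N, fun n => ?_⟩
  have : (α ^ n) ((α ^ N) x) = (α ^ (n + N)) x := by
    rw [pow_add]; rfl
  rw [this]
  exact hN _ (Nat.le_add_left _ _)
end

section
/- Let G be a totally disconnected locally compact metrizable group, α an automorphism, and V a compact open subgroup. Then V_{--} = U_α · V_0, where V_0 := ⋂_{k∈ℤ} α^k(V). -/
open Filter Topology Pointwise Set

set_option linter.unusedSectionVars false
set_option maxHeartbeats 1000000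

namespace Stmt11x

variable {H : Type*} [Group H]

lemma maut_mul_apply (f g : MulAut H) (x : H) : (f * g) x = f (g x) := rfl

lemma zpow_apply_add (β : MulAut H) (z w : ℤ) (x : H) :
    (β ^ (z + w)) x = (β ^ z) ((β ^ w) x) := by
  rw [zpow_add]; rfl

lemma zpow_apply_natCast (β : MulAut H) (n : ℕ) (x : H) :
    (β ^ (n : ℤ)) x = (β ^ n) x := by
  rw [zpow_natCast]

lemma zpow_neg_apply_zpow (β : MulAut H) (z : ℤ) (x : H) :
    (β ^ (-z)) ((β ^ z) x) = x := by
  rw [← zpow_apply_add, neg_add_cancel, zpow_zero]; rfl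

lemma zpow_apply_zpow_neg (β : MulAut H) (z : ℤ) (x : H) :
    (β ^ z) ((β ^ (-z)) x) = x := by
  have := zpow_neg_apply_zpow β (-z) x
  rwa [neg_neg] at this

/-- preimage subgroup under `β ^ z` -/
def cm (β : MulAut H) (z : ℤ) (S : Subgroup H) : Subgroup H :=
  S.comap ((β ^ z) : MulAut H).toMonoidHom

lemma mem_cm {β : MulAut H} {z : ℤ} {S : Subgroup H} {x : H} :
    x ∈ cm β z S ↔ (β ^ z) x ∈ S := Iff.rfl

lemma cm_coe (β : MulAut H) (z : ℤ) (S : Subgroup H) :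
    (cm β z S : Set H) = ⇑(β ^ z) ⁻¹' S := rfl

lemma cm_coe_image (β : MulAut H) (z : ℤ) (S : Subgroup H) :
    (cm β z S : Set H) = ⇑(β ^ (-z)) '' S := by
  ext x
  simp only [cm_coe, Set.mem_preimage, SetLike.mem_coe, Set.mem_image]
  constructor
  · intro h; exact ⟨(β ^ z) x, h, zpow_neg_apply_zpow β z x⟩
  · rintro ⟨y, hy, rfl⟩; rwa [zpow_apply_zpow_neg]

lemma cm_normal {β : MulAut H} {z : ℤ} {S : Subgroup H} (hS : S.Normal) :
    (cm β z S).Normal := hS.comap _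

lemma cm_mono {β : MulAut H} {z : ℤ} {S T : Subgroup H} (h : S ≤ T) :
    cm β z S ≤ cm β z T := fun _ hx => h hx

lemma subgroup_coe_mul_self (S : Subgroup H) : (S : Set H) * (S : Set H) = (S : Set H) := by
  apply Set.Subset.antisymm
  · rintro x ⟨a, ha, b, hb, rfl⟩; exact S.mul_mem ha hb
  · intro x hx; exact ⟨x, hx, 1, S.one_mem, mul_one x⟩

lemma inf_normal {A B : Subgroup H} (hA : A.Normal) (hB : B.Normal) : (A ⊓ B).Normal := by
  constructor
  intro x hx g
  exact ⟨hA.conj_mem x hx.1 g, hB.conj_mem x hx.2 g⟩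

section Topology

variable [TopologicalSpace H] [IsTopologicalGroup H]

lemma cont_pow {β : MulAut H} (hβ : Continuous ⇑β) (n : ℕ) : Continuous ⇑(β ^ n) := by
  induction n with
  | zero => simpa [pow_zero] using continuous_id
  | succ n ih =>
      have : ⇑(β ^ (n+1)) = ⇑(β ^ n) ∘ ⇑β := by
        funext x; rw [Function.comp_apply, ← maut_mul_apply, pow_succ]
      rw [this]; exact ih.comp hβ

lemma cont_zpow {β : MulAut H} (hβ : Continuous ⇑β) (hβ' : Continuous ⇑(β⁻¹ : MulAut H))
    (z : ℤ) : Continuous ⇑(β ^ z) := by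
  rcases z with n | n
  · simpa using cont_pow hβ n
  · have : (β ^ (Int.negSucc n)) = (β⁻¹)^(n+1) := by
      rw [zpow_negSucc, inv_pow]
    rw [this]; exact cont_pow hβ' (n+1)

lemma cm_isOpen {β : MulAut H} (hβ : Continuous ⇑β) (hβ' : Continuous ⇑(β⁻¹ : MulAut H))
    {z : ℤ} {S : Subgroup H} (hS : IsOpen (S : Set H)) : IsOpen (cm β z S : Set H) := by
  rw [cm_coe]; exact hS.preimage (cont_zpow hβ hβ' z)

lemma cm_isClosed {β : MulAut H} (hβ : Continuous ⇑β) (hβ' : Continuous ⇑(β⁻¹ : MulAut H))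
    {z : ℤ} {S : Subgroup H} (hS : IsClosed (S : Set H)) : IsClosed (cm β z S : Set H) := by
  rw [cm_coe]; exact hS.preimage (cont_zpow hβ hβ' z)

end Topology

section Metr

variable [TopologicalSpace H] [IsTopologicalGroup H] [TopologicalSpace.MetrizableSpace H]

/-- conjugation by elements of a compact set preserves convergence to 1 -/
lemma conj_tendsto {K : Set H} (hK : IsCompact K) {c : ℕ → H} (hc : ∀ n, c n ∈ K)
    {x : ℕ → H} (hx : Tendsto x atTop (𝓝 1)) :
    Tendsto (fun n => c n * x n * (c n)⁻¹) atTop (𝓝 1) := by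
  rw [tendsto_nhds]
  intro O hO h1O
  have key : ∀ᶠ g in 𝓝 (1:H), ∀ y ∈ K, y * g * y⁻¹ ∈ O := by
    apply hK.eventually_forall_of_forall_eventually (P := fun g y => y * g * y⁻¹ ∈ O)
    intro y hy
    have hcont : Continuous (fun z : H × H => z.2 * z.1 * z.2⁻¹) := by continuity
    have hmem : (fun z : H × H => z.2 * z.1 * z.2⁻¹) (1, y) ∈ O := by simpa using h1O
    exact hcont.continuousAt.eventually_mem (hO.mem_nhds hmem)
  exact (hx.eventually key).mono (fun n hn => hn (c n) (hc n))

/-- extraction of an asymptotic decomposition along a subgroup -/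
lemma extract (Z : Subgroup H) (E : ℕ → H)
    (hE : ∀ O : Set H, IsOpen O → (1:H) ∈ O → ∀ᶠ n in atTop, E n ∈ (Z : Set H) * O) :
    ∃ z s : ℕ → H, (∀ n, z n ∈ Z) ∧ (∀ n, E n = z n * s n) ∧ Tendsto s atTop (𝓝 1) := by
  classical
  obtain ⟨Ba, hBa⟩ := (𝓝 (1:H)).exists_antitone_basis
  set Bo : ℕ → Set H := fun m => interior (Ba m) with hBo
  have hBoopen : ∀ m, IsOpen (Bo m) := fun m => isOpen_interior
  have hBomem : ∀ m, (1:H) ∈ Bo m := fun m =>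
    mem_interior_iff_mem_nhds.mpr (hBa.1.mem_of_mem trivial)
  have hBoanti : ∀ m m', m ≤ m' → Bo m' ⊆ Bo m :=
    fun m m' h => interior_mono (hBa.2 h)
  set m : ℕ → ℕ := fun n => Nat.findGreatest (fun j => E n ∈ (Z : Set H) * Bo j) n with hm
  have hdec : ∀ n, ∃ zz ss : H, zz ∈ Z ∧ E n = zz * ss ∧
      (E n ∈ (Z : Set H) * Bo (m n) → ss ∈ Bo (m n)) := by
    intro n
    by_cases h : E n ∈ (Z : Set H) * Bo (m n)
    · obtain ⟨x, hx, y, hy, hxy⟩ := h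
      exact ⟨x, y, hx, hxy.symm, fun _ => hy⟩
    · exact ⟨1, E n, Z.one_mem, (one_mul _).symm, fun hh => absurd hh h⟩
  choose z s hz hEzs hss using hdec
  refine ⟨z, s, hz, hEzs, ?_⟩
  rw [hBa.1.tendsto_right_iff]
  intro j _
  have h1 : ∀ᶠ n in atTop, E n ∈ (Z : Set H) * Bo j := hE _ (hBoopen j) (hBomem j)
  have h2 : ∀ᶠ n in atTop, j ≤ n := eventually_ge_atTop j
  filter_upwards [h1, h2] with n hn hjn
  have hmn : j ≤ m n := Nat.le_findGreatest hjn hn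
  have hPn : E n ∈ (Z : Set H) * Bo (m n) :=
    Nat.findGreatest_spec (P := fun j => E n ∈ (Z : Set H) * Bo j) hjn hn
  exact interior_subset (hBoanti j (m n) hmn (hss n hPn))


end Metr

section Compact

variable [TopologicalSpace H] [IsTopologicalGroup H]
  [CompactSpace H] [TotallyDisconnectedSpace H] [TopologicalSpace.MetrizableSpace H]
  (β : MulAut H)

/-- decreasing intersections of compacts multiply through products -/
lemma iInter_mul_subset {A : Set H} (hA : IsCompact A) {B : ℕ → Set H}
    (hBanti : ∀ m n, m ≤ n → B n ⊆ B m) (hBc : ∀ n, IsCompact (B n)) :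
    (⋂ n, A * B n) ⊆ A * ⋂ n, B n := by
  intro x hx
  set S : ℕ → Set (H × H) := fun n => (A ×ˢ B n) ∩ {p : H × H | p.1 * p.2 = x} with hS
  have hSne : ∀ n, (S n).Nonempty := by
    intro n
    obtain ⟨a, ha, b, hb, hab⟩ := mem_iInter.mp hx n
    exact ⟨(a, b), ⟨⟨ha, hb⟩, hab⟩⟩
  have hSclosed : ∀ n, IsClosed (S n) := by
    intro n
    exact ((hA.isClosed.prod (hBc n).isClosed)).inter
      (isClosed_eq (continuous_fst.mul continuous_snd) continuous_const)
  have hScompact : ∀ n, IsCompact (S n) :=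
    fun n => (hA.prod (hBc n)).of_isClosed_subset (hSclosed n) (inter_subset_left)
  have hdir : Directed (fun x1 x2 => x1 ⊇ x2) S := by
    intro i j
    refine ⟨max i j, ?_, ?_⟩
    · exact inter_subset_inter (prod_mono le_rfl (hBanti i _ (le_max_left _ _))) le_rfl
    · exact inter_subset_inter (prod_mono le_rfl (hBanti j _ (le_max_right _ _))) le_rfl
  obtain ⟨p, hp⟩ := IsCompact.nonempty_iInter_of_directed_nonempty_isCompact_isClosed
    S hdir hSne hScompact hSclosed
  have hp0 := mem_iInter.mp hp 0
  refine ⟨p.1, hp0.1.1, p.2, ?_, hp0.2⟩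
  exact mem_iInter.mpr fun n => (mem_iInter.mp hp n).1.2

/-- Tidy above subgroups exist inside every open neighborhood of 1. -/
theorem tidy_above (hβ : Continuous ⇑β) (hβ' : Continuous ⇑(β⁻¹ : MulAut H))
    {O : Set H} (hO : IsOpen O) (h1O : (1:H) ∈ O) :
    ∃ W : Subgroup H, IsOpen (W : Set H) ∧ W.Normal ∧ (W : Set H) ⊆ O ∧
      ∀ w ∈ W, ∃ a b : H,
        (∀ i : ℕ, (β ^ (-(i:ℤ))) a ∈ W) ∧ (∀ i : ℕ, (β ^ (i:ℤ)) b ∈ W) ∧ w = a * b := by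
  classical
  -- clopen neighborhood and open normal subgroup
  obtain ⟨S, ⟨h1S, hSclopen⟩, hSO⟩ := (nhds_basis_clopen (1:H)).mem_iff.mp (hO.mem_nhds h1O)
  obtain ⟨N₀, hN₀S⟩ :=
    IsTopologicalGroup.exist_openNormalSubgroup_sub_clopen_nhds_of_one hSclopen h1S
  -- the descending chain
  set D : ℕ → Subgroup H := fun n =>
    Nat.rec N₀.toSubgroup (fun _ Dn => Dn ⊓ cm β (-1) Dn) n with hD
  have hDsucc : ∀ n, D (n+1) = D n ⊓ cm β (-1) (D n) := fun n => rfl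
  have hDopen : ∀ n, IsOpen (D n : Set H) := by
    intro n; induction n with
    | zero => exact N₀.isOpen
    | succ n ih =>
        rw [hDsucc]
        have : ((D n ⊓ cm β (-1) (D n) : Subgroup H) : Set H)
            = (D n : Set H) ∩ (cm β (-1) (D n) : Set H) := rfl
        rw [this]
        exact ih.inter (cm_isOpen hβ hβ' ih)
  have hDnormal : ∀ n, (D n).Normal := by
    intro n; induction n with
    | zero => exact N₀.isNormal'
    | succ n ih => rw [hDsucc]; exact inf_normal ih (cm_normal ih)
  have hDclosed : ∀ n, IsClosed (D n : Set H) :=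
    fun n => Subgroup.isClosed_of_isOpen _ (hDopen n)
  have hDcompact : ∀ n, IsCompact (D n : Set H) :=
    fun n => (hDclosed n).isCompact
  have hDle : ∀ n, D (n+1) ≤ D n := fun n => by rw [hDsucc]; exact inf_le_left
  have hDanti : ∀ m n, m ≤ n → D n ≤ D m := by
    intro m n h
    induction n with
    | zero => cases Nat.le_zero.mp h; exact le_rfl
    | succ n ih =>
        rcases Nat.lt_or_ge m (n+1) with h' | h'
        · exact le_trans (hDle n) (ih (Nat.lt_succ_iff.mp h'))
        · have : m = n + 1 := le_antisymm h h'
          subst this; exact le_rfl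
  have hDleN₀ : ∀ n, D n ≤ N₀.toSubgroup := fun n => hDanti 0 n (Nat.zero_le n)
  have hDback : ∀ n (y : H), y ∈ D (n+1) → (β ^ (-1:ℤ)) y ∈ D n := by
    intro n y hy
    rw [hDsucc] at hy
    exact hy.2
  have hDback_iter : ∀ (j n : ℕ) (x : H), x ∈ D (n + j) → (β ^ (-(j:ℤ))) x ∈ D n := by
    intro j
    induction j with
    | zero => intro n x hx; simpa using hx
    | succ j ih =>
        intro n x hx
        have h1 : (β ^ (-1:ℤ)) x ∈ D (n + j) := hDback _ x hx
        have := ih n _ h1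
        rw [← zpow_apply_add] at this
        have harith : (-(j:ℤ)) + (-1) = -((j+1 : ℕ):ℤ) := by push_cast; ring
        rwa [harith] at this
  -- the relative index sequence
  set t : ℕ → ℕ := fun n => (D (n+1)).relIndex (D n) with ht
  have hsubgroupOf_open : ∀ (A B : Subgroup H), IsOpen (A : Set H) →
      IsOpen ((A.subgroupOf B : Subgroup B) : Set B) := by
    intro A B hA
    have : ((A.subgroupOf B : Subgroup B) : Set B) = (Subtype.val) ⁻¹' (A : Set H) := by
      rfl
    rw [this]
    exact hA.preimage continuous_subtype_val
  have htfin : ∀ (A B : Subgroup H), IsOpen (A : Set H) → IsOpen (B : Set H) →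
      A.relIndex B ≠ 0 := by
    intro A B hA hB
    have : Finite (↥B ⧸ A.subgroupOf B) :=
      Subgroup.quotient_finite_of_isOpen' B (A.subgroupOf B) hB (hsubgroupOf_open A B hA)
    exact Subgroup.index_ne_zero_of_finite
  have htransport : ∀ (A B : Subgroup H),
      (cm β (-1) A).relIndex (cm β (-1) B) = A.relIndex B := by
    intro A B
    have := Subgroup.relIndex_comap A ((β ^ (-1:ℤ)) : MulAut H).toMonoidHom (cm β (-1) B)
    -- relIndex (comap f A) K = relIndex A (map f K)
    rw [show Subgroup.comap ((β ^ (-1:ℤ)) : MulAut H).toMonoidHom A = cm β (-1) A from rfl] at this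
    rw [this]
    congr 1
    -- map f (comap f B) = B
    exact Subgroup.map_comap_eq_self_of_surjective (MulEquiv.surjective _) _
  have htpos : ∀ n, t n ≠ 0 := by
    intro n
    exact htfin _ _ (hDopen (n+1)) (hDopen n)
  have hteq : ∀ n, t (n+1) = (cm β (-1) (D (n+1))).relIndex (D (n+1)) := by
    intro n
    rw [ht]
    show (D (n+2)).relIndex (D (n+1)) = _
    rw [hDsucc (n+1), inf_comm]
    exact Subgroup.inf_relIndex_right _ _
  have htanti : ∀ n, t (n+1) ≤ t n := by
    intro n
    rw [hteq n]
    have h1 : D (n+1) ≤ cm β (-1) (D n) := by rw [hDsucc]; exact inf_le_right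
    have h2 : (cm β (-1) (D (n+1))).relIndex (cm β (-1) (D n)) = t n := htransport _ _
    calc (cm β (-1) (D (n+1))).relIndex (D (n+1))
        ≤ (cm β (-1) (D (n+1))).relIndex (cm β (-1) (D n)) := by
          apply Subgroup.relIndex_le_of_le_right h1
          rw [h2]; exact htpos n
      _ = t n := h2
  have htmono : ∀ m n, m ≤ n → t n ≤ t m := by
    intro m n h
    induction n with
    | zero => cases Nat.le_zero.mp h; exact le_rfl
    | succ n ih =>
        rcases Nat.lt_or_ge m (n+1) with h' | h'
        · exact le_trans (htanti n) (ih (Nat.lt_succ_iff.mp h'))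
        · have : m = n + 1 := le_antisymm h h'
          subst this; exact le_rfl
  -- stabilization
  have hrange : (Set.range t).Nonempty := ⟨t 0, ⟨0, rfl⟩⟩
  obtain ⟨n₀, hn₀⟩ : ∃ n₀, t n₀ = sInf (Set.range t) := by
    have := Nat.sInf_mem hrange
    obtain ⟨n₀, h⟩ := this
    exact ⟨n₀, h⟩
  have hstab : ∀ n, n₀ ≤ n → t n = t n₀ := by
    intro n hn
    have h1 : t n ≤ t n₀ := htmono n₀ n hn
    have h2 : sInf (Set.range t) ≤ t n := Nat.sInf_le ⟨n, rfl⟩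
    omega
  -- the key coset surjectivity
  have hR : ∀ n, n₀ ≤ n →
      ((cm β (-1) (D n) : Subgroup H) : Set H) ⊆
        ((D (n+1) : Subgroup H) : Set H) * ((cm β (-1) (D (n+1)) : Subgroup H) : Set H) := by
    intro n hn
    set A := D (n+1) with hA
    set Bg := cm β (-1) (D n) with hBg
    set Sg := cm β (-1) (D (n+1)) with hSg
    have hle : A ≤ Bg := by rw [hA, hBg, hDsucc]; exact inf_le_right
    have hfinBg : Finite (↥Bg ⧸ Sg.subgroupOf Bg) :=
      Subgroup.quotient_finite_of_isOpen' Bg (Sg.subgroupOf Bg)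
        (cm_isOpen hβ hβ' (hDopen n))
        (hsubgroupOf_open Sg Bg (cm_isOpen hβ hβ' (hDopen (n+1))))
    have hcard1 : Sg.relIndex A = t (n+1) := by
      rw [hteq n]
    have hcard2 : Sg.relIndex Bg = t n := htransport _ _
    have hcards : Sg.relIndex A = Sg.relIndex Bg := by
      rw [hcard1, hcard2, hstab n hn, hstab (n+1) (le_trans hn (Nat.le_succ n))]
    have hsurj : Function.Surjective (Subgroup.quotientSubgroupOfEmbeddingOfLE Sg hle) := by
      have hbij := (Nat.bijective_iff_injective_and_card
        (Subgroup.quotientSubgroupOfEmbeddingOfLE Sg hle)).mpr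
        ⟨(Subgroup.quotientSubgroupOfEmbeddingOfLE Sg hle).injective, hcards⟩
      exact hbij.surjective
    intro x hx
    obtain ⟨q, hq⟩ := hsurj (QuotientGroup.mk (⟨x, hx⟩ : ↥Bg))
    revert hq
    refine QuotientGroup.induction_on q ?_
    intro g hq
    rw [Subgroup.quotientSubgroupOfEmbeddingOfLE_apply_mk] at hq
    have hmem := QuotientGroup.eq.mp hq
    rw [Subgroup.mem_subgroupOf] at hmem
    have hmem' : ((g : H))⁻¹ * x ∈ Sg := by
      simpa using hmem
    refine ⟨(g : H), g.2, ((g : H))⁻¹ * x, hmem', by group⟩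
  -- the full intersection
  set P : Subgroup H := ⨅ n, D n with hP
  have hPle : ∀ n, P ≤ D n := fun n => iInf_le _ n
  have hPclosed : IsClosed (P : Set H) := by
    rw [hP, Subgroup.coe_iInf]
    exact isClosed_iInter (fun n => hDclosed n)
  have hPback : ∀ x ∈ P, (β ^ (-1:ℤ)) x ∈ P := by
    intro x hx
    rw [Subgroup.mem_iInf]
    intro n
    exact hDback n x (hPle (n+1) hx)
  have hPback_iter : ∀ x ∈ P, ∀ i : ℕ, (β ^ (-(i:ℤ))) x ∈ P := by
    intro x hx i
    induction i with
    | zero => simpa using hx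
    | succ i ih =>
        have h2 := hPback _ ih
        rw [← zpow_apply_add] at h2
        have harith : (-1 : ℤ) + (-(i:ℤ)) = -((i+1:ℕ):ℤ) := by push_cast; ring
        rwa [harith] at h2
  -- intersection identification
  have hDinter : ∀ n : ℕ, (⋂ m : ℕ, ((D (n+1+m)) : Set H)) = (P : Set H) := by
    intro n
    apply Set.Subset.antisymm
    · intro x hx
      rw [hP, Subgroup.coe_iInf]
      refine mem_iInter.mpr fun k => ?_
      have h1 : x ∈ ((D (n+1+k)) : Set H) := mem_iInter.mp hx k
      exact hDanti k (n+1+k) (by omega) h1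
    · intro x hx
      refine mem_iInter.mpr fun k => ?_
      rw [hP, Subgroup.coe_iInf] at hx
      exact mem_iInter.mp hx (n+1+k)
  have hRinf : ∀ n, n₀ ≤ n →
      ((cm β (-1) (D n) : Subgroup H) : Set H) ⊆
        ((D (n+1)) : Set H) * ((cm β (-1) P : Subgroup H) : Set H) := by
    intro n hn
    have hfin : ∀ m : ℕ, ((cm β (-1) (D n)) : Set H) ⊆
        ((D (n+1)) : Set H) * ((cm β (-1) (D (n+1+m))) : Set H) := by
      intro m
      induction m with
      | zero =>
          have h0 : n + 1 + 0 = n + 1 := rfl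
          rw [h0]
          exact hR n hn
      | succ m ih =>
          have step := hR (n+1+m) (by omega)
          have harith : n+1+m+1 = n+1+(m+1) := by omega
          calc ((cm β (-1) (D n)) : Set H)
              ⊆ ((D (n+1)) : Set H) * ((cm β (-1) (D (n+1+m))) : Set H) := ih
            _ ⊆ ((D (n+1)) : Set H) *
                (((D (n+1+m+1)) : Set H) * ((cm β (-1) (D (n+1+m+1))) : Set H)) :=
                mul_subset_mul_left step
            _ = (((D (n+1)) : Set H) * ((D (n+1+m+1)) : Set H)) *
                ((cm β (-1) (D (n+1+m+1))) : Set H) := by rw [mul_assoc]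
            _ ⊆ (((D (n+1)) : Set H) * ((D (n+1)) : Set H)) *
                ((cm β (-1) (D (n+1+m+1))) : Set H) := by
                apply mul_subset_mul_right
                apply mul_subset_mul_left
                exact fun x hx => (hDanti (n+1) (n+1+m+1) (by omega)) hx
            _ = ((D (n+1)) : Set H) * ((cm β (-1) (D (n+1+(m+1)))) : Set H) := by
                rw [subgroup_coe_mul_self, harith]
    intro x hx
    have hx2 : x ∈ ⋂ m : ℕ, ((D (n+1)) : Set H) * ((cm β (-1) (D (n+1+m))) : Set H) :=
      mem_iInter.mpr fun m => hfin m hx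
    have hkey := iInter_mul_subset (hDcompact (n+1))
      (B := fun m => ((cm β (-1) (D (n+1+m))) : Set H))
      (fun m m' h => by
        intro y hy
        exact cm_mono (hDanti (n+1+m) (n+1+m') (by omega)) hy)
      (fun m => (cm_isClosed hβ hβ' (hDclosed _)).isCompact) hx2
    have hident : (⋂ m : ℕ, ((cm β (-1) (D (n+1+m))) : Set H)) = ((cm β (-1) P) : Set H) := by
      have : ∀ m : ℕ, ((cm β (-1) (D (n+1+m))) : Set H)
          = ⇑(β ^ (-1:ℤ)) ⁻¹' ((D (n+1+m)) : Set H) := fun m => rfl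
      simp only [this]
      rw [← Set.preimage_iInter, hDinter n]
      rfl
    rwa [hident] at hkey
  -- the factorization via iteration and cluster points
  have hfact : ∀ w ∈ D n₀, ∃ bb aa : H,
      (∀ i : ℕ, (β ^ (i:ℤ)) bb ∈ D n₀) ∧ aa ∈ P ∧ w = bb * aa := by
    intro w hw
    have EX : ∀ kx : ℕ × H, ∃ y : H × H, kx.2 ∈ D (n₀ + kx.1) →
        (y.1 ∈ D (n₀ + kx.1 + 1) ∧ y.2 ∈ P ∧ β kx.2 = y.1 * β y.2) := by
      rintro ⟨k, xx⟩
      by_cases h : xx ∈ D (n₀ + k)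
      · have hmem : β xx ∈ ((cm β (-1) (D (n₀+k))) : Set H) := by
          show (β ^ (-1:ℤ)) (β xx) ∈ D (n₀+k)
          have : (β ^ (-1:ℤ)) (β xx) = xx := by
            have := zpow_neg_apply_zpow β 1 xx
            rwa [zpow_one] at this
          rwa [this]
        have := hRinf (n₀+k) (by omega) hmem
        obtain ⟨d', hd', qq, hqq, heq⟩ := this
        refine ⟨(d', (β ^ (-1:ℤ)) qq), fun _ => ⟨hd', hqq, ?_⟩⟩
        have hback : β ((β ^ (-1:ℤ)) qq) = qq := by
          have := zpow_apply_zpow_neg β 1 qq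
          rwa [zpow_one] at this
        rw [hback]
        exact heq.symm
      · exact ⟨(1,1), fun hh => absurd hh h⟩
    choose F hF using EX
    set d : ℕ → H := fun k => Nat.rec w (fun k dk => (F (k, dk)).1) k with hd
    have hd0 : d 0 = w := rfl
    have hdsucc : ∀ k, d (k+1) = (F (k, d k)).1 := fun k => rfl
    have hdmem : ∀ k, d k ∈ D (n₀ + k) := by
      intro k
      induction k with
      | zero => simpa [hd0] using hw
      | succ k ih =>
          have := (hF (k, d k) ih).1
          rwa [hdsucc]
    set q : ℕ → H := fun k => (F (k, d k)).2 with hqdef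
    have hqmem : ∀ k, q k ∈ P := fun k => (hF (k, d k) (hdmem k)).2.1
    have hqrel : ∀ k, β (d k) = d (k+1) * β (q k) := by
      intro k
      have := (hF (k, d k) (hdmem k)).2.2
      rwa [← hdsucc] at this
    set e : ℕ → H := fun k => (β ^ (-(k:ℤ))) (d k) with he
    set c : ℕ → H := fun k => Nat.rec (1:H) (fun k ck => (β ^ (-(k:ℤ))) (q k) * ck) k with hcc
    have hcsucc : ∀ k, c (k+1) = (β ^ (-(k:ℤ))) (q k) * c k := fun k => rfl
    have hcP : ∀ k, c k ∈ P := by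
      intro k
      induction k with
      | zero => exact P.one_mem
      | succ k ih => rw [hcsucc]; exact P.mul_mem (hPback_iter _ (hqmem k) k) ih
    have hek : ∀ k, e k = (β ^ (-(k:ℤ))) (d k) := fun k => rfl
    have hwdec : ∀ k, w = e k * c k := by
      intro k
      induction k with
      | zero =>
          have : e 0 = w := by
            rw [hek]
            show (β ^ (-(0:ℕ):ℤ)) (d 0) = w
            rw [hd0]
            norm_num
          rw [this]
          show w = w * (1:H)
          rw [mul_one]
      | succ k ih =>
          have hstep : e k = e (k+1) * (β ^ (-(k:ℤ))) (q k) := by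
            rw [hek, hek]
            have h1 := congrArg (fun y => (β ^ (-((k+1:ℕ):ℤ))) y) (hqrel k)
            simp only [map_mul] at h1
            have h2 : (β ^ (-((k+1:ℕ):ℤ))) (β (d k)) = (β ^ (-(k:ℤ))) (d k) := by
              have hz : β (d k) = (β ^ (1:ℤ)) (d k) := by rw [zpow_one]
              rw [hz, ← zpow_apply_add]
              norm_num
            have h3 : (β ^ (-((k+1:ℕ):ℤ))) (β (q k)) = (β ^ (-(k:ℤ))) (q k) := by
              have hz : β (q k) = (β ^ (1:ℤ)) (q k) := by rw [zpow_one]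
              rw [hz, ← zpow_apply_add]
              norm_num
            rw [h2, h3] at h1
            exact h1
          rw [ih, hstep, hcsucc, mul_assoc]
    obtain ⟨bb, φ, hφ, hbb⟩ := CompactSpace.tendsto_subseq e
    refine ⟨bb, bb⁻¹ * w, ?_, ?_, by group⟩
    · intro i
      have hcont : Continuous ⇑(β ^ (i:ℤ)) := cont_zpow hβ hβ' _
      have htend : Tendsto (fun l => (β ^ (i:ℤ)) (e (φ l))) atTop (𝓝 ((β ^ (i:ℤ)) bb)) :=
        (hcont.tendsto bb).comp hbb
      have hmem : ∀ᶠ l in atTop, (β ^ (i:ℤ)) (e (φ l)) ∈ ((D (n₀ + i)) : Set H) := by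
        filter_upwards [eventually_ge_atTop i] with l hl
        have hφl : i ≤ φ l := le_trans hl (hφ.le_apply)
        have harith : n₀ + i + (φ l - i) = n₀ + φ l := by omega
        have hx : d (φ l) ∈ D ((n₀ + i) + (φ l - i)) := by rw [harith]; exact hdmem (φ l)
        have := hDback_iter (φ l - i) (n₀ + i) _ hx
        have harith2 : (β ^ (i:ℤ)) (e (φ l)) = (β ^ (-((φ l - i : ℕ):ℤ))) (d (φ l)) := by
          rw [he]
          show (β ^ (i:ℤ)) ((β ^ (-((φ l:ℕ):ℤ))) (d (φ l))) = _
          rw [← zpow_apply_add]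
          congr 1
          push_cast [Nat.cast_sub hφl]
          ring
        rw [harith2]
        exact this
      have hclosed := hDclosed (n₀ + i)
      have hfinal : (β ^ (i:ℤ)) bb ∈ ((D (n₀ + i)) : Set H) :=
        hclosed.mem_of_tendsto htend hmem
      exact hDanti n₀ (n₀ + i) (by omega) hfinal
    · -- bb⁻¹ * w ∈ P as limit of c (φ l)
      have htend : Tendsto (fun l => (e (φ l))⁻¹ * w) atTop (𝓝 (bb⁻¹ * w)) := by
        have : Continuous (fun y : H => y⁻¹ * w) := by continuity
        exact (this.tendsto bb).comp hbb
      have heq : ∀ l, (e (φ l))⁻¹ * w = c (φ l) := by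
        intro l
        rw [hwdec (φ l)]
        group
      have hmem : ∀ᶠ l in atTop, (e (φ l))⁻¹ * w ∈ (P : Set H) := by
        filter_upwards with l
        rw [heq l]
        exact hcP (φ l)
      exact hPclosed.mem_of_tendsto htend hmem
  -- final packaging, with the inverse trick to swap the order
  refine ⟨D n₀, hDopen n₀, hDnormal n₀, fun x hx => hSO (hN₀S (hDleN₀ n₀ hx)), ?_⟩
  intro w hw
  obtain ⟨bb, aa, hbb, haa, hwba⟩ := hfact w⁻¹ ((D n₀).inv_mem hw)
  refine ⟨aa⁻¹, bb⁻¹, ?_, ?_, ?_⟩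
  · intro i
    rw [map_inv]
    exact (D n₀).inv_mem (hPle n₀ (hPback_iter _ haa i))
  · intro i
    rw [map_inv]
    exact (D n₀).inv_mem (hbb i)
  · have : w = (bb * aa)⁻¹ := by rw [← hwba]; group
    rw [this]; group

/-- `x` with all backward images in `W` -/
def Asub (W : Subgroup H) : Subgroup H := ⨅ i : ℕ, cm β (-(i:ℤ)) W

/-- `x` with all forward images in `W` -/
def Bsub (W : Subgroup H) : Subgroup H := ⨅ i : ℕ, cm β (i:ℤ) W

/-- forward images of `Bsub W` -/
def Qsub (W : Subgroup H) (s : ℕ) : Subgroup H := cm β (-(s:ℤ)) (Bsub β W)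

/-- the two-sided core of `W` -/
def Zsub (W : Subgroup H) : Subgroup H := ⨅ z : ℤ, cm β z W

variable {β}

lemma mem_Asub {W : Subgroup H} {x : H} :
    x ∈ Asub β W ↔ ∀ i : ℕ, (β ^ (-(i:ℤ))) x ∈ W := by
  simp [Asub, Subgroup.mem_iInf, mem_cm]

lemma mem_Bsub {W : Subgroup H} {x : H} :
    x ∈ Bsub β W ↔ ∀ i : ℕ, (β ^ (i:ℤ)) x ∈ W := by
  simp [Bsub, Subgroup.mem_iInf, mem_cm]

lemma mem_Qsub {W : Subgroup H} {s : ℕ} {x : H} :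
    x ∈ Qsub β W s ↔ (β ^ (-(s:ℤ))) x ∈ Bsub β W := Iff.rfl

lemma mem_Zsub {W : Subgroup H} {x : H} :
    x ∈ Zsub β W ↔ ∀ z : ℤ, (β ^ z) x ∈ W := by
  simp [Zsub, Subgroup.mem_iInf, mem_cm]

lemma Asub_le {W : Subgroup H} : Asub β W ≤ W := by
  intro x hx
  have := mem_Asub.mp hx 0
  simpa using this

lemma Bsub_le {W : Subgroup H} : Bsub β W ≤ W := by
  intro x hx
  have := mem_Bsub.mp hx 0
  simpa using this

lemma Zsub_le {W : Subgroup H} : Zsub β W ≤ W := by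
  intro x hx
  have := mem_Zsub.mp hx 0
  simpa using this

lemma Asub_mono {W W' : Subgroup H} (h : W ≤ W') : Asub β W ≤ Asub β W' :=
  fun x hx => mem_Asub.mpr fun i => h (mem_Asub.mp hx i)

lemma Bsub_mono {W W' : Subgroup H} (h : W ≤ W') : Bsub β W ≤ Bsub β W' :=
  fun x hx => mem_Bsub.mpr fun i => h (mem_Bsub.mp hx i)

lemma Asub_back {W : Subgroup H} {x : H} (hx : x ∈ Asub β W) (s : ℕ) :
    (β ^ (-(s:ℤ))) x ∈ Asub β W := by
  rw [mem_Asub]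
  intro i
  rw [← zpow_apply_add]
  have harith : (-(i:ℤ)) + (-(s:ℤ)) = -(((i+s:ℕ)):ℤ) := by push_cast; ring
  rw [harith]
  exact mem_Asub.mp hx (i+s)

lemma Bsub_fwd {W : Subgroup H} {x : H} (hx : x ∈ Bsub β W) (s : ℕ) :
    (β ^ (s:ℤ)) x ∈ Bsub β W := by
  rw [mem_Bsub]
  intro i
  rw [← zpow_apply_add]
  have harith : ((i:ℤ)) + ((s:ℤ)) = (((i+s:ℕ)):ℤ) := by push_cast; ring
  rw [harith]
  exact mem_Bsub.mp hx (i+s)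

lemma Bsub_fwd_one {W : Subgroup H} {x : H} (hx : x ∈ Bsub β W) : β x ∈ Bsub β W := by
  have := Bsub_fwd hx 1
  rwa [show ((1:ℕ):ℤ) = (1:ℤ) by norm_num, zpow_one] at this

lemma Qsub_zero {W : Subgroup H} : Qsub β W 0 = Bsub β W := by
  ext x
  rw [mem_Qsub]
  norm_num

lemma Qsub_anti {W : Subgroup H} {s s' : ℕ} (h : s ≤ s') : Qsub β W s' ≤ Qsub β W s := by
  intro x hx
  rw [mem_Qsub] at hx ⊢
  have := Bsub_fwd hx (s' - s)
  rw [← zpow_apply_add] at this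
  have harith : ((s' - s : ℕ):ℤ) + (-(s':ℤ)) = -(s:ℤ) := by
    push_cast [Nat.cast_sub h]; ring
  rwa [harith] at this

lemma Qsub_fwd_one {W : Subgroup H} {s : ℕ} {x : H} (hx : x ∈ Qsub β W s) :
    β x ∈ Qsub β W (s+1) := by
  rw [mem_Qsub] at hx ⊢
  have heq : (β ^ (-((s+1:ℕ):ℤ))) (β x) = (β ^ (-(s:ℤ))) x := by
    have hz : β x = (β ^ (1:ℤ)) x := by rw [zpow_one]
    rw [hz, ← zpow_apply_add]
    congr 1
    push_cast; ring
  rwa [heq]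

lemma Zsub_inv_mem {W : Subgroup H} {x : H} : x ∈ Zsub β W ↔ β x ∈ Zsub β W := by
  rw [mem_Zsub, mem_Zsub]
  constructor
  · intro h z
    have := h (z + 1)
    rwa [zpow_apply_add, zpow_one] at this
  · intro h z
    have := h (z - 1)
    have heq : (β ^ (z-1)) (β x) = (β ^ z) x := by
      have hz : β x = (β ^ (1:ℤ)) x := by rw [zpow_one]
      rw [hz, ← zpow_apply_add, sub_add_cancel]
    rwa [heq] at this

lemma iInter_Qsub {W : Subgroup H} :
    (⋂ s : ℕ, (Qsub β W s : Set H)) = (Zsub β W : Set H) := by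
  apply Set.Subset.antisymm
  · intro x hx
    have hmem : ∀ s : ℕ, x ∈ Qsub β W s := fun s => mem_iInter.mp hx s
    show x ∈ Zsub β W
    rw [mem_Zsub]
    intro z
    rcases le_or_gt 0 z with h | h
    · have hB : x ∈ Bsub β W := by
        have h0 := hmem 0
        rwa [Qsub_zero] at h0
      have := mem_Bsub.mp hB z.toNat
      rwa [Int.toNat_of_nonneg h] at this
    · have hs : z = -(((-z).toNat : ℕ):ℤ) := by
        rw [Int.toNat_of_nonneg (by omega)]; ring
      have := hmem ((-z).toNat)
      rw [mem_Qsub] at this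
      have h2 := Bsub_le this
      rwa [← hs] at h2
  · intro x hx
    refine mem_iInter.mpr fun s => ?_
    show x ∈ Qsub β W s
    rw [mem_Qsub, mem_Bsub]
    intro i
    rw [← zpow_apply_add]
    exact mem_Zsub.mp hx _

lemma Asub_normal {W : Subgroup H} (hW : W.Normal) : (Asub β W).Normal := by
  constructor
  intro x hx g
  rw [mem_Asub]
  intro i
  simp only [map_mul, map_inv]
  exact hW.conj_mem _ (mem_Asub.mp hx i) _

lemma Bsub_normal {W : Subgroup H} (hW : W.Normal) : (Bsub β W).Normal := by
  constructor
  intro x hx g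
  rw [mem_Bsub]
  intro i
  simp only [map_mul, map_inv]
  exact hW.conj_mem _ (mem_Bsub.mp hx i) _

lemma Qsub_normal {W : Subgroup H} (hW : W.Normal) {s : ℕ} : (Qsub β W s).Normal :=
  cm_normal (Bsub_normal hW)

lemma Asub_closed (hβ : Continuous ⇑β) (hβ' : Continuous ⇑(β⁻¹ : MulAut H))
    {W : Subgroup H} (hW : IsClosed (W : Set H)) : IsClosed (Asub β W : Set H) := by
  rw [Asub, Subgroup.coe_iInf]
  exact isClosed_iInter fun i => cm_isClosed hβ hβ' hW

lemma Bsub_closed (hβ : Continuous ⇑β) (hβ' : Continuous ⇑(β⁻¹ : MulAut H))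
    {W : Subgroup H} (hW : IsClosed (W : Set H)) : IsClosed (Bsub β W : Set H) := by
  rw [Bsub, Subgroup.coe_iInf]
  exact isClosed_iInter fun i => cm_isClosed hβ hβ' hW

lemma Qsub_closed (hβ : Continuous ⇑β) (hβ' : Continuous ⇑(β⁻¹ : MulAut H))
    {W : Subgroup H} (hW : IsClosed (W : Set H)) {s : ℕ} :
    IsClosed (Qsub β W s : Set H) :=
  cm_isClosed hβ hβ' (Bsub_closed hβ hβ' hW)

lemma Zsub_closed (hβ : Continuous ⇑β) (hβ' : Continuous ⇑(β⁻¹ : MulAut H))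
    {W : Subgroup H} (hW : IsClosed (W : Set H)) : IsClosed (Zsub β W : Set H) := by
  rw [Zsub, Subgroup.coe_iInf]
  exact isClosed_iInter fun z => cm_isClosed hβ hβ' hW

/-- The main tracking stage. -/
theorem stage (hβ : Continuous ⇑β) (hβ' : Continuous ⇑(β⁻¹ : MulAut H)) (k : ℕ → H)
    (hε : Tendsto (fun n => (β (k n))⁻¹ * k (n+1)) atTop (𝓝 1))
    (U : Set H) (hU : IsOpen U) (h1U : (1:H) ∈ U) :
    ∃ (Z : Subgroup H) (v : H) (z s : ℕ → H),
      IsClosed (Z : Set H) ∧ (Z : Set H) ⊆ U ∧ (∀ x : H, x ∈ Z ↔ β x ∈ Z) ∧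
      (∀ n, z n ∈ Z) ∧ (∀ n, k n = (β ^ n) v * z n * s n) ∧ Tendsto s atTop (𝓝 1) ∧
      Tendsto (fun n => (β (z n))⁻¹ * z (n+1)) atTop (𝓝 1) := by
  classical
  set ε : ℕ → H := fun n => (β (k n))⁻¹ * k (n+1) with hεdef
  -- tidy family
  have hEX : ∀ O' : Set H, IsOpen O' → (1:H) ∈ O' → ∃ W : Subgroup H,
      IsOpen (W : Set H) ∧ W.Normal ∧ (W : Set H) ⊆ O' ∧
      ∀ w ∈ W, ∃ a b : H,
        (∀ i : ℕ, (β ^ (-(i:ℤ))) a ∈ W) ∧ (∀ i : ℕ, (β ^ (i:ℤ)) b ∈ W) ∧ w = a * b :=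
    fun O' hO' h1O' => tidy_above β hβ hβ' hO' h1O'
  obtain ⟨Ba, hBa⟩ := (𝓝 (1:H)).exists_antitone_basis
  set Bo : ℕ → Set H := fun m => interior (Ba m) with hBodef
  have hBoopen : ∀ m, IsOpen (Bo m) := fun m => isOpen_interior
  have hBomem : ∀ m, (1:H) ∈ Bo m := fun m =>
    mem_interior_iff_mem_nhds.mpr (hBa.1.mem_of_mem trivial)
  set TF : ℕ → Subgroup H → Prop := fun t Wt =>
    IsOpen (Wt : Set H) ∧ Wt.Normal ∧ (Wt : Set H) ⊆ Bo t ∧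
    ∀ w ∈ Wt, ∃ a b : H,
      (∀ i : ℕ, (β ^ (-(i:ℤ))) a ∈ Wt) ∧ (∀ i : ℕ, (β ^ (i:ℤ)) b ∈ Wt) ∧ w = a * b
    with hTFdef
  have hW0ex : ∃ W0 : Subgroup H, TF 0 W0 ∧ (W0 : Set H) ⊆ U := by
    obtain ⟨W0, h1, h2, h3, h4⟩ := hEX (Bo 0 ∩ U) ((hBoopen 0).inter hU) ⟨hBomem 0, h1U⟩
    exact ⟨W0, ⟨h1, h2, fun x hx => (h3 hx).1, h4⟩, fun x hx => (h3 hx).2⟩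
  obtain ⟨W0, hW0, hW0U⟩ := hW0ex
  have hstepex : ∀ t (Wt : Subgroup H), TF t Wt →
      ∃ W', TF (t+1) W' ∧ (W' : Set H) ⊆ (Wt : Set H) := by
    intro t Wt hWt
    obtain ⟨W', h1, h2, h3, h4⟩ := hEX ((Wt : Set H) ∩ Bo (t+1))
      (hWt.1.inter (hBoopen (t+1))) ⟨Wt.one_mem, hBomem (t+1)⟩
    exact ⟨W', ⟨h1, h2, fun x hx => (h3 hx).2, h4⟩, fun x hx => (h3 hx).1⟩
  choose stepF hstepF using hstepex
  set Wfam : (t : ℕ) → {W : Subgroup H // TF t W} := fun t =>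
    Nat.rec ⟨W0, hW0⟩ (fun t prev => ⟨stepF t prev.1 prev.2, (hstepF t prev.1 prev.2).1⟩) t
    with hWfamdef
  set W : ℕ → Subgroup H := fun t => (Wfam t).1 with hWdef
  have hWTF : ∀ t, TF t (W t) := fun t => (Wfam t).2
  have hWopen : ∀ t, IsOpen ((W t : Subgroup H) : Set H) := fun t => (hWTF t).1
  have hWnormal : ∀ t, (W t).Normal := fun t => (hWTF t).2.1
  have hWclosed : ∀ t, IsClosed ((W t : Subgroup H) : Set H) :=
    fun t => Subgroup.isClosed_of_isOpen _ (hWopen t)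
  have hWtidy : ∀ t, ∀ w ∈ W t, ∃ a b : H,
      (∀ i : ℕ, (β ^ (-(i:ℤ))) a ∈ W t) ∧ (∀ i : ℕ, (β ^ (i:ℤ)) b ∈ W t) ∧ w = a * b :=
    fun t => (hWTF t).2.2.2
  have hWchain : ∀ t, W (t+1) ≤ W t := by
    intro t
    have : (W (t+1) : Set H) ⊆ (W t : Set H) := (hstepF t (Wfam t).1 (Wfam t).2).2
    exact fun x hx => this hx
  have hWle : ∀ t t', t ≤ t' → W t' ≤ W t := by
    intro t t' h
    induction t' with
    | zero => cases Nat.le_zero.mp h; exact le_rfl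
    | succ t' ih =>
        rcases Nat.lt_or_ge t (t'+1) with h' | h'
        · exact le_trans (hWchain t') (ih (Nat.lt_succ_iff.mp h'))
        · have : t = t' + 1 := le_antisymm h h'
          subst this; exact le_rfl
  have hbasis : ∀ O : Set H, IsOpen O → (1:H) ∈ O → ∃ t, ((W t : Subgroup H) : Set H) ⊆ O := by
    intro O hO h1O
    obtain ⟨m, -, hm⟩ := hBa.1.mem_iff.mp (hO.mem_nhds h1O)
    exact ⟨m, subset_trans (hWTF m).2.2.1 (subset_trans interior_subset hm)⟩
  -- thresholds
  have hεWex : ∀ t : ℕ, ∃ N, ∀ n ≥ N, ε n ∈ W t := by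
    intro t
    have := hε ((hWopen t).mem_nhds (W t).one_mem)
    rw [mem_map] at this
    exact eventually_atTop.mp this
  choose M0 hM0 using hεWex
  set M : ℕ → ℕ := fun t => Nat.rec (M0 0) (fun t prev => max (M0 (t+1)) prev) t with hMdef
  have hMsucc : ∀ t, M (t+1) = max (M0 (t+1)) (M t) := fun t => rfl
  have hMge : ∀ t, M0 t ≤ M t := by
    intro t
    cases t with
    | zero => exact le_rfl
    | succ t => rw [hMsucc]; exact le_max_left _ _
  have hMmono : ∀ t t', t ≤ t' → M t ≤ M t' := by
    intro t t' h
    induction t' with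
    | zero => cases Nat.le_zero.mp h; exact le_rfl
    | succ t' ih =>
        rcases Nat.lt_or_ge t (t'+1) with h' | h'
        · exact le_trans (ih (Nat.lt_succ_iff.mp h')) (by rw [hMsucc]; exact le_max_right _ _)
        · have : t = t' + 1 := le_antisymm h h'
          subst this; exact le_rfl
  have hM : ∀ t n, M t ≤ n → ε n ∈ W t := fun t n h => hM0 t n (le_trans (hMge t) h)
  set N₁ : ℕ := M 0 with hN₁def
  -- shifted data
  set k' : ℕ → H := fun n => k (n + N₁) with hk'def
  set ε' : ℕ → H := fun n => ε (n + N₁) with hε'def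
  have hε'eq : ∀ n, ε' n = (β (k' n))⁻¹ * k' (n+1) := by
    intro n
    show ε (n + N₁) = (β (k (n + N₁)))⁻¹ * k ((n+1) + N₁)
    have : (n + N₁) + 1 = (n + 1) + N₁ := by omega
    rw [hεdef]
    simp only []
    rw [this]
  have hk'rec : ∀ n, k' (n+1) = β (k' n) * ε' n := by
    intro n
    rw [hε'eq n]
    group
  set M' : ℕ → ℕ := fun t => M t - N₁ with hM'def
  have hM'0 : M' 0 = 0 := by simp [hM'def, hN₁def]
  have hM' : ∀ t n, M' t ≤ n → ε' n ∈ W t := by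
    intro t n h
    apply hM
    have h2 : N₁ ≤ M t := hMmono 0 t (Nat.zero_le t)
    have h3 : M t - N₁ ≤ n := h
    show M t ≤ n + N₁
    omega
  set τ : ℕ → ℕ := fun j => Nat.findGreatest (fun t => M' t ≤ j) j with hτdef
  have hτspec : ∀ j, M' (τ j) ≤ j := by
    intro j
    exact Nat.findGreatest_spec (P := fun t => M' t ≤ j) (Nat.zero_le j)
      (by show M' 0 ≤ j; rw [hM'0]; exact Nat.zero_le j)
  have hτmem : ∀ j, ε' j ∈ W (τ j) := fun j => hM' _ _ (hτspec j)
  have hτle : ∀ j, τ j ≤ j := fun j => Nat.findGreatest_le j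
  have hτmono : ∀ j j', j ≤ j' → τ j ≤ τ j' := by
    intro j j' h
    exact Nat.le_findGreatest (le_trans (hτle j) h) (le_trans (hτspec j) h)
  have hτbig : ∀ t j, M' t ≤ j → t ≤ j → t ≤ τ j := by
    intro t j h1 h2
    exact Nat.le_findGreatest h2 h1
  -- factorizations
  have habex : ∀ j, ∃ a b : H, (∀ i : ℕ, (β ^ (-(i:ℤ))) a ∈ W (τ j)) ∧
      (∀ i : ℕ, (β ^ (i:ℤ)) b ∈ W (τ j)) ∧ ε' j = a * b :=
    fun j => hWtidy (τ j) (ε' j) (hτmem j)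
  choose a b ha hb habeq using habex
  have haA : ∀ j, a j ∈ Asub β (W (τ j)) := fun j => mem_Asub.mpr (ha j)
  have hbB : ∀ j, b j ∈ Bsub β (W (τ j)) := fun j => mem_Bsub.mpr (hb j)
  -- core sequences
  set d : ℕ → H := fun n => (β ^ (-(n:ℤ))) (k' n) with hddef
  set γ : ℕ → H := fun j => (β ^ (-((j+1:ℕ):ℤ))) (a j) with hγdef
  set w : ℕ → H := fun m => Nat.rec (d 0) (fun m wm => wm * γ m) m with hwdef
  have hwsucc : ∀ m, w (m+1) = w m * γ m := fun m => rfl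
  set ρ : ℕ → H := fun m => (β ^ (m:ℤ)) ((w m)⁻¹ * d m) with hρdef
  have hρ0 : ρ 0 = 1 := by
    show (β ^ ((0:ℕ):ℤ)) ((w 0)⁻¹ * d 0) = 1
    have : w 0 = d 0 := rfl
    rw [this]
    simp
  have hcollapse : ∀ (m : ℕ) (x : H), (β ^ (-((m+1:ℕ):ℤ))) (β x) = (β ^ (-(m:ℤ))) x := by
    intro m x
    have hz : β x = (β ^ (1:ℤ)) x := by rw [zpow_one]
    rw [hz, ← zpow_apply_add]
    congr 1
    push_cast; ring
  have hcollapse2 : ∀ (m : ℕ) (x : H), (β ^ ((m+1:ℕ):ℤ)) x = β ((β ^ (m:ℤ)) x) := by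
    intro m x
    have : ((m+1:ℕ):ℤ) = 1 + (m:ℤ) := by push_cast; ring
    rw [this, zpow_apply_add, zpow_one]
  have hdsucc : ∀ n, d (n+1) = d n * (β ^ (-((n+1:ℕ):ℤ))) (ε' n) := by
    intro n
    show (β ^ (-((n+1:ℕ):ℤ))) (k' (n+1)) = (β ^ (-(n:ℤ))) (k' n) * (β ^ (-((n+1:ℕ):ℤ))) (ε' n)
    rw [hk'rec n, map_mul]
    congr 1
    exact hcollapse n (k' n)
  have hρsucc : ∀ m, ρ (m+1) = ((a m)⁻¹ * (β (ρ m)) * (a m)) * (b m) := by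
    intro m
    show (β ^ ((m+1:ℕ):ℤ)) ((w (m+1))⁻¹ * d (m+1)) = _
    rw [hwsucc, hdsucc]
    have hexp : (w m * γ m)⁻¹ * (d m * (β ^ (-((m+1:ℕ):ℤ))) (ε' m))
        = (γ m)⁻¹ * ((w m)⁻¹ * d m) * (β ^ (-((m+1:ℕ):ℤ))) (ε' m) := by group
    rw [hexp]
    rw [map_mul, map_mul, map_inv]
    have h1 : (β ^ ((m+1:ℕ):ℤ)) (γ m) = a m := by
      rw [hγdef]
      show (β ^ ((m+1:ℕ):ℤ)) ((β ^ (-((m+1:ℕ):ℤ))) (a m)) = a m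
      exact zpow_apply_zpow_neg β _ _
    have h2 : (β ^ ((m+1:ℕ):ℤ)) ((β ^ (-((m+1:ℕ):ℤ))) (ε' m)) = ε' m :=
      zpow_apply_zpow_neg β _ _
    have h3 : (β ^ ((m+1:ℕ):ℤ)) ((w m)⁻¹ * d m) = β (ρ m) := by
      rw [hcollapse2]
    rw [h1, h2, h3, habeq m]
    group
  -- global bound and invariant
  have hρB : ∀ m, ρ m ∈ Bsub β (W 0) := by
    intro m
    induction m with
    | zero => rw [hρ0]; exact (Bsub β (W 0)).one_mem
    | succ m ih =>
        rw [hρsucc]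
        refine (Bsub β (W 0)).mul_mem ?_ ?_
        · have hconj := (Bsub_normal (hWnormal 0)).conj_mem _ (Bsub_fwd_one ih) ((a m)⁻¹)
          simpa [inv_inv] using hconj
        · exact Bsub_mono (hWle 0 (τ m) (Nat.zero_le _)) (hbB m)
  have hSinv : ∀ p m, p ≤ m →
      ρ m ∈ ((Qsub β (W 0) (m - p) : Subgroup H) : Set H) *
        ((Bsub β (W (τ p)) : Subgroup H) : Set H) := by
    intro p m hpm
    induction m, hpm using Nat.le_induction with
    | base =>
        refine ⟨ρ p, ?_, 1, (Bsub β (W (τ p))).one_mem, mul_one _⟩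
        have : p - p = 0 := by omega
        rw [this, Qsub_zero]
        exact hρB p
    | succ m hpm ih =>
        obtain ⟨qq, hqq, x, hx, hqx⟩ := ih
        have heq : ρ (m+1) = ((a m)⁻¹ * β qq * (a m)) * (((a m)⁻¹ * β x * (a m)) * b m) := by
          rw [hρsucc, ← hqx, map_mul]
          group
        rw [heq]
        refine Set.mul_mem_mul ?_ ?_
        · have h1 : β qq ∈ Qsub β (W 0) ((m - p) + 1) := Qsub_fwd_one hqq
          have h2 : (m+1) - p = (m - p) + 1 := by omega
          rw [h2]
          have hconj := (Qsub_normal (hWnormal 0) (s := (m-p)+1)).conj_mem _ h1 ((a m)⁻¹)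
          simpa [inv_inv] using hconj
        · refine (Bsub β (W (τ p))).mul_mem ?_ ?_
          · have h1 : β x ∈ Bsub β (W (τ p)) := Bsub_fwd_one hx
            have hconj := (Bsub_normal (hWnormal (τ p))).conj_mem _ h1 ((a m)⁻¹)
            simpa [inv_inv] using hconj
          · exact Bsub_mono (hWle (τ p) (τ m) (hτmono p m hpm)) (hbB m)
  -- tail bound
  have htail : ∀ n m, n ≤ m → (β ^ (n:ℤ)) ((w n)⁻¹ * w m) ∈ Asub β (W (τ n)) := by
    intro n m hnm
    induction m, hnm using Nat.le_induction with
    | base =>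
        have : (w n)⁻¹ * w n = 1 := by group
        rw [this, map_one]
        exact (Asub β (W (τ n))).one_mem
    | succ m hnm ih =>
        rw [hwsucc]
        have heq : (w n)⁻¹ * (w m * γ m) = ((w n)⁻¹ * w m) * γ m := by group
        rw [heq, map_mul]
        refine (Asub β (W (τ n))).mul_mem ih ?_
        have h1 : (β ^ (n:ℤ)) (γ m) = (β ^ (-(((m+1-n:ℕ)):ℤ))) (a m) := by
          rw [hγdef]
          show (β ^ (n:ℤ)) ((β ^ (-((m+1:ℕ):ℤ))) (a m)) = _
          rw [← zpow_apply_add]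
          congr 1
          have : ((m+1-n:ℕ):ℤ) = ((m+1:ℕ):ℤ) - (n:ℤ) := by
            push_cast [Nat.cast_sub (by omega : n ≤ m+1)]
            ring
          rw [this]; ring
        rw [h1]
        exact Asub_mono (hWle (τ n) (τ m) (hτmono n m hnm)) (Asub_back (haA m) _)
  -- cluster point
  obtain ⟨v', φ, hφ, hv'⟩ := CompactSpace.tendsto_subseq w
  have hvtail : ∀ n, (β ^ (n:ℤ)) ((w n)⁻¹ * v') ∈ Asub β (W (τ n)) := by
    intro n
    have hcont : Continuous (fun y : H => (β ^ (n:ℤ)) ((w n)⁻¹ * y)) :=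
      (cont_zpow hβ hβ' _).comp (continuous_const.mul continuous_id)
    have htend : Tendsto (fun l => (β ^ (n:ℤ)) ((w n)⁻¹ * w (φ l))) atTop
        (𝓝 ((β ^ (n:ℤ)) ((w n)⁻¹ * v'))) := (hcont.tendsto v').comp hv'
    refine (Asub_closed hβ hβ' (hWclosed (τ n))).mem_of_tendsto htend ?_
    filter_upwards [eventually_ge_atTop n] with l hl
    exact htail n (φ l) (le_trans hl (hφ.le_apply))
  -- the error sequence
  set E : ℕ → H := fun n => ((β ^ (n:ℤ)) v')⁻¹ * k' n with hEdef
  have hEeq : ∀ n, E n = ((β ^ (n:ℤ)) ((w n)⁻¹ * v'))⁻¹ * ρ n := by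
    intro n
    show ((β ^ (n:ℤ)) v')⁻¹ * k' n = _
    rw [hρdef]
    simp only [map_mul, map_inv]
    have : (β ^ (n:ℤ)) (d n) = k' n := by
      rw [hddef]
      exact zpow_apply_zpow_neg β _ _
    rw [this]
    group
  have hEvic : ∀ O : Set H, IsOpen O → (1:H) ∈ O →
      ∀ᶠ n in atTop, E n ∈ ((Zsub β (W 0) : Subgroup H) : Set H) * O := by
    intro O hO h1O
    obtain ⟨O₂, hO₂, h1O₂, hO₂O⟩ := exists_open_nhds_one_mul_subset (hO.mem_nhds h1O)
    obtain ⟨O₁, hO₁, h1O₁, hO₁O₂⟩ := exists_open_nhds_one_mul_subset (hO₂.mem_nhds h1O₂)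
    have hO₁sub : O₁ ⊆ O₂ := by
      intro x hx
      have : x * 1 ∈ O₁ * O₁ := Set.mul_mem_mul hx h1O₁
      rw [mul_one] at this
      exact hO₁O₂ this
    obtain ⟨t₀, ht₀⟩ := hbasis O₁ hO₁ h1O₁
    -- squeeze
    have hQsq : ∃ s₀ : ℕ, ∀ s, s₀ ≤ s →
        ((Qsub β (W 0) s : Subgroup H) : Set H) ⊆
          ((Zsub β (W 0) : Subgroup H) : Set H) * O₁ := by
      have hdir : Directed (fun x1 x2 => x1 ⊇ x2)
          (fun s : ℕ => ((Qsub β (W 0) s : Subgroup H) : Set H)) := by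
        intro i j
        refine ⟨max i j, ?_, ?_⟩
        · intro x hx; exact Qsub_anti (le_max_left i j) hx
        · intro x hx; exact Qsub_anti (le_max_right i j) hx
      have hcpt : ∀ s : ℕ, IsCompact ((Qsub β (W 0) s : Subgroup H) : Set H) :=
        fun s => (Qsub_closed hβ hβ' (hWclosed 0)).isCompact
      have hcl : ∀ s : ℕ, IsClosed ((Qsub β (W 0) s : Subgroup H) : Set H) :=
        fun s => Qsub_closed hβ hβ' (hWclosed 0)
      have hnhds : ∀ x ∈ ⋂ s : ℕ, ((Qsub β (W 0) s : Subgroup H) : Set H),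
          ((Zsub β (W 0) : Subgroup H) : Set H) * O₁ ∈ 𝓝 x := by
        intro x hx
        rw [iInter_Qsub] at hx
        have hopen : IsOpen ((fun y => x * y) '' O₁) :=
          (Homeomorph.mulLeft x).isOpenMap _ hO₁
        have hmem : x ∈ (fun y => x * y) '' O₁ := ⟨1, h1O₁, mul_one x⟩
        refine Filter.mem_of_superset (hopen.mem_nhds hmem) ?_
        rintro y ⟨o, ho, rfl⟩
        exact Set.mul_mem_mul hx ho
      obtain ⟨s₀, hs₀⟩ := exists_subset_nhds_of_isCompact'
        (V := fun s : ℕ => ((Qsub β (W 0) s : Subgroup H) : Set H)) hdir hcpt hcl hnhds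
      exact ⟨s₀, fun s hs => subset_trans (fun x hx => Qsub_anti hs hx) hs₀⟩
    obtain ⟨s₀, hs₀⟩ := hQsq
    set p : ℕ := max (M' t₀) t₀ with hpdef
    have hτp : t₀ ≤ τ p := hτbig t₀ p (le_max_left _ _) (le_max_right _ _)
    filter_upwards [eventually_ge_atTop (p + s₀ + M' t₀ + t₀)] with n hn
    have hτn : t₀ ≤ τ n := hτbig t₀ n (by omega) (by omega)
    -- A-part
    set aa : H := ((β ^ (n:ℤ)) ((w n)⁻¹ * v'))⁻¹ with haadef
    have haaA : aa ∈ Asub β (W (τ n)) := (Asub β (W (τ n))).inv_mem (hvtail n)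
    have haaO : aa ∈ O₁ := ht₀ (hWle t₀ (τ n) hτn (Asub_le haaA))
    -- ρ-part
    obtain ⟨qq, hqq, x, hx, hqx⟩ := hSinv p n (by omega)
    have hqZ := hs₀ (n - p) (by omega) hqq
    obtain ⟨ζ, hζ, oo, hoo, hζo⟩ := hqZ
    have hxO : x ∈ O₁ := ht₀ (hWle t₀ (τ p) hτp (Bsub_le hx))
    -- conjugate
    have hζH : (ζ⁻¹ * aa * ζ) ∈ Asub β (W (τ n)) := by
      have := (Asub_normal (hWnormal (τ n))).conj_mem _ haaA ζ⁻¹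
      simpa [inv_inv] using this
    have hζO : (ζ⁻¹ * aa * ζ) ∈ O₁ := ht₀ (hWle t₀ (τ n) hτn (Asub_le hζH))
    have hEform : E n = ζ * ((ζ⁻¹ * aa * ζ) * oo * x) := by
      rw [hEeq n, ← haadef, ← hqx, ← hζo]
      group
    rw [hEform]
    refine Set.mul_mem_mul hζ ?_
    apply hO₂O
    refine Set.mul_mem_mul ?_ (hO₁sub hxO)
    apply hO₁O₂
    exact Set.mul_mem_mul hζO hoo
  -- extract
  obtain ⟨z', s', hz', hEzs', hs'⟩ := extract (Zsub β (W 0)) E hEvic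
  -- unshift
  refine ⟨Zsub β (W 0), (β ^ (-(N₁:ℤ))) v',
    (fun n => if N₁ ≤ n then z' (n - N₁) else 1),
    (fun n => if N₁ ≤ n then s' (n - N₁) else ((β ^ n) ((β ^ (-(N₁:ℤ))) v'))⁻¹ * k n),
    Zsub_closed hβ hβ' (hWclosed 0), subset_trans (fun x hx => Zsub_le hx) hW0U,
    fun x => Zsub_inv_mem, ?_, ?_, ?_, ?_⟩
  · intro n
    by_cases h : N₁ ≤ n
    · simpa [h] using hz' (n - N₁)
    · simpa [h] using (Zsub β (W 0)).one_mem
  · intro n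
    by_cases h : N₁ ≤ n
    · simp only [if_pos h]
      have hEexp : ((β ^ ((n - N₁:ℕ):ℤ)) v')⁻¹ * k' (n - N₁)
          = z' (n - N₁) * s' (n - N₁) := hEzs' (n - N₁)
      have hk'n : k' (n - N₁) = k n := by
        show k ((n - N₁) + N₁) = k n
        congr 1
        omega
      have hpow : (β ^ ((n - N₁ : ℕ):ℤ)) v' = (β ^ n) ((β ^ (-(N₁:ℤ))) v') := by
        rw [← zpow_apply_natCast β n, ← zpow_apply_add]
        congr 1
        push_cast [Nat.cast_sub h]
        ring
      rw [← hk'n, ← hpow, mul_assoc, ← hEexp]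
      group
    · simp only [if_neg h]
      group
  · have hcomp : Tendsto (fun n : ℕ => s' (n - N₁)) atTop (𝓝 1) :=
      hs'.comp (tendsto_sub_atTop_nat N₁)
    apply Tendsto.congr' ?_ hcomp
    filter_upwards [eventually_ge_atTop N₁] with n hn
    exact (if_pos hn).symm
  · have hzerr : ∀ m : ℕ, (β (z' m))⁻¹ * z' (m+1) = β (s' m) * ε' m * (s' (m+1))⁻¹ := by
      intro m
      have hE1 : ((β ^ ((m:ℕ):ℤ)) v')⁻¹ * k' m = z' m * s' m := hEzs' m
      have h1 : z' m = ((β ^ ((m:ℕ):ℤ)) v')⁻¹ * k' m * (s' m)⁻¹ := by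
        rw [hE1]; group
      have hE2 : ((β ^ ((m+1:ℕ):ℤ)) v')⁻¹ * k' (m+1) = z' (m+1) * s' (m+1) := hEzs' (m+1)
      have h2 : z' (m+1) = ((β ^ ((m+1:ℕ):ℤ)) v')⁻¹ * k' (m+1) * (s' (m+1))⁻¹ := by
        rw [hE2]; group
      rw [h1, h2, hk'rec m]
      simp only [map_mul, map_inv]
      rw [hcollapse2 m v']
      group
    have hβs : Tendsto (fun m => β (s' m)) atTop (𝓝 1) := by
      have := (hβ.tendsto 1).comp hs'
      rwa [map_one] at this
    have hε'' : Tendsto ε' atTop (𝓝 1) := by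
      have : Tendsto (fun n : ℕ => ε (n + N₁)) atTop (𝓝 1) :=
        hε.comp (tendsto_add_atTop_nat N₁)
      exact this
    have hsinv : Tendsto (fun m => (s' (m+1))⁻¹) atTop (𝓝 1) := by
      have := (hs'.comp (tendsto_add_atTop_nat 1)).inv
      rwa [inv_one] at this
    have hfinal : Tendsto (fun m => β (s' m) * ε' m * (s' (m+1))⁻¹) atTop (𝓝 1) := by
      have := (hβs.mul hε'').mul hsinv
      rwa [mul_one, mul_one] at this
    apply Tendsto.congr' ?_ (hfinal.comp (tendsto_sub_atTop_nat N₁))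
    filter_upwards [eventually_ge_atTop (N₁+1)] with n hn
    have h1 : N₁ ≤ n := by omega
    have h2 : N₁ ≤ n + 1 := by omega
    have h3 : n + 1 - N₁ = (n - N₁) + 1 := by omega
    simp only [Function.comp_apply, if_pos h1, if_pos h2]
    rw [h3]
    exact (hzerr (n - N₁)).symm

end Compact

section Ambient

variable {G : Type*} [Group G] [TopologicalSpace G] [IsTopologicalGroup G]
  [TotallyDisconnectedSpace G] [TopologicalSpace.MetrizableSpace G]

theorem stageG (α : MulAut G) (hc : Continuous ⇑α) (hc' : Continuous ⇑(α⁻¹ : MulAut G))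
    (C : Subgroup G) (hcpt : IsCompact (C : Set G))
    (hinv : ∀ x : G, x ∈ C ↔ α x ∈ C)
    (k : ℕ → G) (hk : ∀ n, k n ∈ C)
    (hε : Tendsto (fun n => (α (k n))⁻¹ * k (n+1)) atTop (𝓝 1))
    (U : Set G) (hU : IsOpen U) (h1U : (1:G) ∈ U) :
    ∃ (C' : Subgroup G) (v : G) (k' s : ℕ → G),
      C' ≤ C ∧ IsCompact (C' : Set G) ∧ (∀ x : G, x ∈ C' ↔ α x ∈ C') ∧
      (C' : Set G) ⊆ U ∧ v ∈ C ∧ (∀ n, k' n ∈ C') ∧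
      Tendsto (fun n => (α (k' n))⁻¹ * k' (n+1)) atTop (𝓝 1) ∧
      (∀ n, k n = (α ^ n) v * k' n * s n) ∧ Tendsto s atTop (𝓝 1) := by
  haveI : CompactSpace ↥C := isCompact_iff_compactSpace.mp hcpt
  haveI : TopologicalSpace.MetrizableSpace ↥C :=
    TopologicalSpace.MetrizableSpace.subtype (C : Set G)
  have hmem1 : ∀ x : ↥C, α (x:G) ∈ C := fun x => (hinv x).mp x.2
  have hainv : ∀ y : G, α ((α⁻¹ : MulAut G) y) = y := by
    intro y
    rw [MulAut.inv_def]
    exact α.apply_symm_apply y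
  have hainv' : ∀ y : G, (α⁻¹ : MulAut G) (α y) = y := by
    intro y
    rw [MulAut.inv_def]
    exact α.symm_apply_apply y
  have hmem2 : ∀ x : ↥C, (α⁻¹ : MulAut G) (x:G) ∈ C := by
    intro x
    refine (hinv _).mpr ?_
    rw [hainv]
    exact x.2
  set β : MulAut ↥C :=
    { toFun := fun x => ⟨α x, hmem1 x⟩
      invFun := fun x => ⟨(α⁻¹ : MulAut G) x, hmem2 x⟩
      left_inv := by intro x; ext; exact hainv' _
      right_inv := by intro x; ext; exact hainv _
      map_mul' := by intro x y; ext; exact map_mul α _ _ } with hβdef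
  have hβval : ∀ x : ↥C, (β x : G) = α (x:G) := fun x => rfl
  have hβinv : (β⁻¹ : MulAut ↥C) = β.symm := MulAut.inv_def _ _
  have hβinvval : ∀ x : ↥C, ((β⁻¹ : MulAut ↥C) x : G) = (α⁻¹ : MulAut G) (x:G) := by
    intro x
    rw [hβinv]
    rfl
  have hβc : Continuous ⇑β := by
    apply Continuous.subtype_mk
    exact hc.comp continuous_subtype_val
  have hβc' : Continuous ⇑(β⁻¹ : MulAut ↥C) := by
    have : ⇑(β⁻¹ : MulAut ↥C) = fun x : ↥C => (⟨(α⁻¹ : MulAut G) (x:G), hmem2 x⟩ : ↥C) := by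
      funext x
      ext
      exact hβinvval x
    rw [this]
    apply Continuous.subtype_mk
    exact hc'.comp continuous_subtype_val
  have hβpow : ∀ (n : ℕ) (x : ↥C), ((β ^ n) x : G) = (α ^ n) (x:G) := by
    intro n
    induction n with
    | zero => intro x; rfl
    | succ n ih =>
        intro x
        have h1 : (β ^ (n+1)) x = (β ^ n) (β x) := by rw [pow_succ]; rfl
        have h2 : (α ^ (n+1)) (x:G) = (α ^ n) (α (x:G)) := by rw [pow_succ]; rfl
        rw [h1, h2, ih, hβval]
  set kc : ℕ → ↥C := fun n => ⟨k n, hk n⟩ with hkcdef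
  have hεc : Tendsto (fun n => (β (kc n))⁻¹ * kc (n+1)) atTop (𝓝 1) := by
    exact tendsto_subtype_rng.mpr hε
  obtain ⟨Z, v, z, s, hZcl, hZU, hZinv, hzZ, hdecomp, hstend, hzerr⟩ :=
    stage (β := β) hβc hβc' kc hεc (Subtype.val ⁻¹' U) (hU.preimage continuous_subtype_val) h1U
  refine ⟨Z.map C.subtype, (v : G), fun n => ((z n : ↥C) : G), fun n => ((s n : ↥C) : G),
    Subgroup.map_subtype_le Z, ?_, ?_, ?_, v.2, ?_, ?_, ?_, ?_⟩
  · have him : ((Z.map C.subtype : Subgroup G) : Set G) = Subtype.val '' (Z : Set ↥C) := by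
      rw [Subgroup.coe_map]
      rfl
    rw [him]
    exact (hZcl.isCompact).image continuous_subtype_val
  · intro x
    constructor
    · rintro ⟨y, hy, rfl⟩
      exact ⟨β y, (hZinv y).mp hy, (hβval y).symm⟩
    · rintro ⟨y, hy, hyx⟩
      have hxC : x ∈ C := by
        refine (hinv x).mpr ?_
        rw [← hyx]
        exact y.2
      refine ⟨⟨x, hxC⟩, ?_, rfl⟩
      have hbxy : β ⟨x, hxC⟩ = y := by
        ext
        exact hyx.symm
      rw [← hbxy] at hy
      exact (hZinv _).mpr hy
  · rintro x ⟨y, hy, rfl⟩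
    exact hZU hy
  · intro n
    exact ⟨z n, hzZ n, rfl⟩
  · have h2 : Tendsto (fun n => (((β (z n))⁻¹ * z (n+1) : ↥C) : G)) atTop (𝓝 ((1:↥C):G)) :=
      tendsto_subtype_rng.mp hzerr
    have h2' : Tendsto (fun n => (((β (z n))⁻¹ * z (n+1) : ↥C) : G)) atTop (𝓝 (1:G)) := by
      simpa using h2
    apply Tendsto.congr ?_ h2'
    intro n
    push_cast
    rw [hβval]
  · intro n
    have := hdecomp n
    have hval := congrArg (Subtype.val : ↥C → G) this
    push_cast at hval
    rw [hβpow] at hval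
    exact hval
  · have := tendsto_subtype_rng.mp hstend
    simpa using this

/-- state for the outer recursion -/
structure OuterSt (G : Type*) [Group G] where
  C : Subgroup G
  k : ℕ → G
  P : G
  σ : ℕ → G

theorem main_lemma (α : MulAut G) (hc : Continuous ⇑α) (hc' : Continuous ⇑(α⁻¹ : MulAut G))
    (V : Subgroup G) (hVc : IsCompact (V : Set G)) (hVo : IsOpen (V : Set G))
    (y : G) (hy : ∀ n : ℕ, (α ^ n) y ∈ V) :
    ∃ u v : G, Tendsto (fun n : ℕ => (α ^ n) u) atTop (𝓝 1) ∧
      (∀ z : ℤ, (α ^ z) v ∈ V) ∧ y = u * v := by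
  classical
  have hVcl : IsClosed (V : Set G) := hVc.isClosed
  -- the core subgroup
  set K : Subgroup G := ⨅ z : ℤ, cm α z V with hKdef
  have hmemK : ∀ x : G, x ∈ K ↔ ∀ z : ℤ, (α ^ z) x ∈ V := by
    intro x
    simp [hKdef, Subgroup.mem_iInf, mem_cm]
  have hKsubV : (K : Set G) ⊆ (V : Set G) := by
    intro x hx
    have := (hmemK x).mp hx 0
    simpa using this
  have hKcl : IsClosed (K : Set G) := by
    rw [hKdef, Subgroup.coe_iInf]
    exact isClosed_iInter fun z => cm_isClosed hc hc' hVcl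
  have hKcpt : IsCompact (K : Set G) := hVc.of_isClosed_subset hKcl hKsubV
  have hKinv : ∀ x : G, x ∈ K ↔ α x ∈ K := by
    intro x
    rw [hmemK, hmemK]
    constructor
    · intro h z
      have := h (z + 1)
      rwa [zpow_apply_add, zpow_one] at this
    · intro h z
      have := h (z - 1)
      have heq : (α ^ (z-1)) (α x) = (α ^ z) x := by
        have hz : α x = (α ^ (1:ℤ)) x := by rw [zpow_one]
        rw [hz, ← zpow_apply_add, sub_add_cancel]
      rwa [heq] at this
  -- pow invariance helper
  have hpowinv : ∀ (C : Subgroup G), (∀ x : G, x ∈ C ↔ α x ∈ C) →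
      ∀ (n : ℕ) (x : G), x ∈ C → (α ^ n) x ∈ C := by
    intro C hinv n
    induction n with
    | zero => intro x hx; simpa using hx
    | succ n ih =>
        intro x hx
        have h1 : (α ^ (n+1)) x = (α ^ n) (α x) := by rw [pow_succ]; rfl
        rw [h1]
        exact ih _ ((hinv x).mp hx)
  -- the squeezing sets
  set Qs : ℕ → Set G := fun n => ⋂ i : ℕ, ((cm α ((i:ℤ) - n) V : Subgroup G) : Set G) with hQsdef
  have hmemQs : ∀ (n : ℕ) (x : G), x ∈ Qs n ↔ ∀ i : ℕ, (α ^ ((i:ℤ) - n)) x ∈ V := by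
    intro n x
    rw [hQsdef]
    simp only [Set.mem_iInter, SetLike.mem_coe, mem_cm]
  have hyQ : ∀ n : ℕ, (α ^ n) y ∈ Qs n := by
    intro n
    rw [hmemQs]
    intro i
    rw [← zpow_apply_natCast α n, ← zpow_apply_add]
    have : (i:ℤ) - n + n = i := by ring
    rw [this, zpow_apply_natCast]
    exact hy i
  have hQanti : ∀ m n : ℕ, m ≤ n → Qs n ⊆ Qs m := by
    intro m n hmn x hx
    rw [hmemQs] at hx ⊢
    intro i
    have := hx (i + (n - m))
    have harith : ((i + (n - m) : ℕ):ℤ) - n = (i:ℤ) - m := by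
      push_cast [Nat.cast_sub hmn]
      ring
    rwa [harith] at this
  have hQsubV : ∀ n, Qs n ⊆ (V : Set G) := by
    intro n x hx
    have := (hmemQs n x).mp hx n
    simpa using this
  have hQcl : ∀ n, IsClosed (Qs n) := by
    intro n
    rw [hQsdef]
    exact isClosed_iInter fun i => cm_isClosed hc hc' hVcl
  have hQcpt : ∀ n, IsCompact (Qs n) :=
    fun n => hVc.of_isClosed_subset (hQcl n) (hQsubV n)
  have hQK : (⋂ n : ℕ, Qs n) = (K : Set G) := by
    apply Set.Subset.antisymm
    · intro x hx
      show x ∈ K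
      rw [hmemK]
      intro z
      have hn : (0:ℤ) ≤ z + z.natAbs := by omega
      have h1 : x ∈ Qs (z.natAbs) := mem_iInter.mp hx _
      have h2 := (hmemQs _ x).mp h1 ((z + z.natAbs).toNat)
      have harith : (((z + z.natAbs).toNat : ℕ):ℤ) - (z.natAbs : ℕ) = z := by
        rw [Int.toNat_of_nonneg hn]
        ring
      rwa [harith] at h2
    · intro x hx
      refine mem_iInter.mpr fun n => ?_
      rw [hmemQs]
      intro i
      exact (hmemK x).mp hx _
  have hQinv : ∀ (n : ℕ) (x : G), x ∈ Qs n → x⁻¹ ∈ Qs n := by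
    intro n x hx
    rw [hmemQs] at hx ⊢
    intro i
    rw [map_inv]
    exact V.inv_mem (hx i)
  -- squeeze and extraction
  have hsq : ∀ O : Set G, IsOpen O → (1:G) ∈ O → ∃ N : ℕ, Qs N ⊆ (K : Set G) * O := by
    intro O hO h1O
    have hdir : Directed (fun x1 x2 => x1 ⊇ x2) Qs := by
      intro i j
      exact ⟨max i j, hQanti i _ (le_max_left _ _), hQanti j _ (le_max_right _ _)⟩
    have hnhds : ∀ x ∈ ⋂ n, Qs n, (K : Set G) * O ∈ 𝓝 x := by
      intro x hx
      rw [hQK] at hx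
      have hopen : IsOpen ((fun w => x * w) '' O) := (Homeomorph.mulLeft x).isOpenMap _ hO
      have hmem : x ∈ (fun w => x * w) '' O := ⟨1, h1O, mul_one x⟩
      refine Filter.mem_of_superset (hopen.mem_nhds hmem) ?_
      rintro w ⟨o, ho, rfl⟩
      exact Set.mul_mem_mul hx ho
    exact exists_subset_nhds_of_isCompact' hdir hQcpt hQcl hnhds
  have hEvic : ∀ O : Set G, IsOpen O → (1:G) ∈ O →
      ∀ᶠ n in atTop, ((α ^ n) y)⁻¹ ∈ (K : Set G) * O := by
    intro O hO h1O
    obtain ⟨N, hN⟩ := hsq O hO h1O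
    filter_upwards [eventually_ge_atTop N] with n hn
    exact hN (hQanti N n hn (hQinv n _ (hyQ n)))
  obtain ⟨zE, sE, hzE, hEzs, hsE⟩ := extract K (fun n => ((α ^ n) y)⁻¹) hEvic
  set o : ℕ → G := fun n => (sE n)⁻¹ with hodef
  set kk : ℕ → G := fun n => (zE n)⁻¹ with hkkdef
  have hotend : Tendsto o atTop (𝓝 1) := by
    have := hsE.inv
    rwa [inv_one] at this
  have hkkK : ∀ n, kk n ∈ K := fun n => K.inv_mem (hzE n)
  have hyok : ∀ n, (α ^ n) y = o n * kk n := by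
    intro n
    have := hEzs n
    rw [hodef, hkkdef]
    simp only []
    rw [← mul_inv_rev, ← this, inv_inv]
  have hpowcollapse : ∀ (n : ℕ) (x : G), (α ^ (n+1)) x = α ((α ^ n) x) := by
    intro n x
    rw [pow_succ']
    rfl
  have hεkk : Tendsto (fun n => (α (kk n))⁻¹ * kk (n+1)) atTop (𝓝 1) := by
    have heq : ∀ n, (α (kk n))⁻¹ * kk (n+1)
        = ((α ^ (n+1)) y)⁻¹ * ((α (o n)) * (o (n+1))⁻¹) * (((α ^ (n+1)) y)⁻¹)⁻¹ := by
      intro n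
      have h1 : kk n = (o n)⁻¹ * (α ^ n) y := by rw [hyok n]; group
      have h2 : kk (n+1) = (o (n+1))⁻¹ * (α ^ (n+1)) y := by rw [hyok (n+1)]; group
      rw [h1, h2, map_mul, map_inv, hpowcollapse]
      group
    have hX : Tendsto (fun n => (α (o n)) * (o (n+1))⁻¹) atTop (𝓝 1) := by
      have hβo : Tendsto (fun n => α (o n)) atTop (𝓝 1) := by
        have := (hc.tendsto 1).comp hotend
        rwa [map_one] at this
      have hoinv : Tendsto (fun n => (o (n+1))⁻¹) atTop (𝓝 1) := by
        have := (hotend.comp (tendsto_add_atTop_nat 1)).inv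
        rwa [inv_one] at this
      have := hβo.mul hoinv
      rwa [mul_one] at this
    have hconj := conj_tendsto hVc (c := fun n => ((α ^ (n+1)) y)⁻¹)
      (fun n => V.inv_mem (hy (n+1))) hX
    exact Tendsto.congr (fun n => (heq n).symm) hconj
  -- outer recursion
  obtain ⟨Ba, hBa⟩ := (𝓝 (1:G)).exists_antitone_basis
  set Uo : ℕ → Set G := fun m => interior (Ba m) with hUodef
  have hUoopen : ∀ m, IsOpen (Uo m) := fun m => isOpen_interior
  have hUomem : ∀ m, (1:G) ∈ Uo m := fun m =>
    mem_interior_iff_mem_nhds.mpr (hBa.1.mem_of_mem trivial)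
  set SP : OuterSt G → Prop := fun st =>
    st.C ≤ K ∧ IsCompact (st.C : Set G) ∧ (∀ x : G, x ∈ st.C ↔ α x ∈ st.C) ∧
    (∀ n, st.k n ∈ st.C) ∧
    Tendsto (fun n => (α (st.k n))⁻¹ * st.k (n+1)) atTop (𝓝 1) ∧
    st.P ∈ K ∧ Tendsto st.σ atTop (𝓝 1) ∧
    ∀ n, kk n = (α ^ n) st.P * st.k n * st.σ n
    with hSPdef
  have hst₀ : SP ⟨K, kk, 1, fun _ => 1⟩ := by
    refine ⟨le_rfl, hKcpt, hKinv, hkkK, hεkk, K.one_mem, tendsto_const_nhds, ?_⟩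
    intro n
    simp
  have hstep : ∀ (i : ℕ) (st : OuterSt G), SP st →
      ∃ st' : OuterSt G, SP st' ∧ st'.C ≤ st.C ∧ (st'.C : Set G) ⊆ Uo (i+1) ∧
        (st.P)⁻¹ * st'.P ∈ st.C := by
    intro i st hst
    obtain ⟨hle, hcpt, hinv, hkmem, hεst, hPK, hσ, hrel⟩ := hst
    obtain ⟨C', v, k', s, hC'le, hC'cpt, hC'inv, hC'U, hvC, hk'C, hε', hdec, hstd⟩ :=
      stageG α hc hc' st.C hcpt hinv st.k hkmem hεst (Uo (i+1)) (hUoopen _) (hUomem _)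
    refine ⟨⟨C', k', st.P * v, fun n => s n * st.σ n⟩, ?_, hC'le, hC'U, ?_⟩
    · refine ⟨le_trans hC'le hle, hC'cpt, hC'inv, hk'C, hε', K.mul_mem hPK (hle hvC), ?_, ?_⟩
      · have := hstd.mul hσ
        rwa [mul_one] at this
      · intro n
        show kk n = (α ^ n) (st.P * v) * k' n * (s n * st.σ n)
        rw [map_mul, hrel n, hdec n]
        group
    · show (st.P)⁻¹ * (st.P * v) ∈ st.C
      have : (st.P)⁻¹ * (st.P * v) = v := by group
      rw [this]
      exact hvC
  choose SF hSF using hstep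
  set f : ℕ → {st : OuterSt G // SP st} := fun n =>
    Nat.rec ⟨⟨K, kk, 1, fun _ => 1⟩, hst₀⟩
      (fun i x => ⟨SF i x.1 x.2, (hSF i x.1 x.2).1⟩) n with hfdef
  have hfsucc : ∀ i, (f (i+1)).1 = SF i (f i).1 (f i).2 := fun i => rfl
  have hfconn : ∀ i, ((f (i+1)).1.C ≤ (f i).1.C) ∧ ((f (i+1)).1.C : Set G) ⊆ Uo (i+1) ∧
      ((f i).1.P)⁻¹ * (f (i+1)).1.P ∈ (f i).1.C := by
    intro i
    have h := hSF i (f i).1 (f i).2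
    exact ⟨by rw [hfsucc]; exact h.2.1, by rw [hfsucc]; exact h.2.2.1,
      by rw [hfsucc]; exact h.2.2.2⟩
  have hCdesc : ∀ i j, i ≤ j → (f j).1.C ≤ (f i).1.C := by
    intro i j h
    induction j, h using Nat.le_induction with
    | base => exact le_rfl
    | succ j hij ih => exact le_trans (hfconn j).1 ih
  have hPrel : ∀ i j, i ≤ j → ((f i).1.P)⁻¹ * (f j).1.P ∈ (f i).1.C := by
    intro i j h
    induction j, h using Nat.le_induction with
    | base =>
        have : ((f i).1.P)⁻¹ * (f i).1.P = 1 := by group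
        rw [this]
        exact (f i).1.C.one_mem
    | succ j hij ih =>
        have heq : ((f i).1.P)⁻¹ * (f (j+1)).1.P
            = (((f i).1.P)⁻¹ * (f j).1.P) * (((f j).1.P)⁻¹ * (f (j+1)).1.P) := by group
        rw [heq]
        exact (f i).1.C.mul_mem ih (hCdesc i j hij (hfconn j).2.2)
  have hPK : ∀ i, (f i).1.P ∈ (K : Set G) := fun i => (f i).2.2.2.2.2.2.1
  obtain ⟨vst, hvstK, ψ, hψ, hvlim⟩ := hKcpt.tendsto_subseq (x := fun i => (f i).1.P) hPK
  have hvrel : ∀ i, ((f i).1.P)⁻¹ * vst ∈ ((f i).1.C : Set G) := by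
    intro i
    have hcont : Continuous (fun w : G => ((f i).1.P)⁻¹ * w) := continuous_const.mul continuous_id
    have htend : Tendsto (fun l => ((f i).1.P)⁻¹ * (f (ψ l)).1.P) atTop
        (𝓝 (((f i).1.P)⁻¹ * vst)) := (hcont.tendsto vst).comp hvlim
    have hclosed : IsClosed ((f i).1.C : Set G) := (f i).2.2.1.isClosed
    refine hclosed.mem_of_tendsto htend ?_
    filter_upwards [eventually_ge_atTop i] with l hl
    exact hPrel i (ψ l) (le_trans hl (hψ.le_apply))
  -- tracking by vst
  have htrack : Tendsto (fun n => ((α ^ n) vst)⁻¹ * kk n) atTop (𝓝 1) := by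
    rw [tendsto_nhds]
    intro O hO h1O
    obtain ⟨O₂, hO₂, h1O₂, hO₂O⟩ := exists_open_nhds_one_mul_subset (hO.mem_nhds h1O)
    obtain ⟨m, -, hm⟩ := hBa.1.mem_iff.mp (hO₂.mem_nhds h1O₂)
    have hUoO₂ : Uo m ⊆ O₂ := subset_trans interior_subset hm
    set i : ℕ := m + 1 with hidef
    have hCiO₂ : ((f i).1.C : Set G) ⊆ O₂ := by
      intro x hx
      apply hUoO₂
      have h1 : ((f i).1.C : Set G) ⊆ Uo i := (hfconn m).2.1
      have h2 : Uo i ⊆ Uo m := interior_mono (hBa.2 (by omega))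
      exact h2 (h1 hx)
    set ci : G := ((f i).1.P)⁻¹ * vst with hcidef
    have hciC : ci ∈ (f i).1.C := hvrel i
    have hveq : vst = (f i).1.P * ci := by rw [hcidef]; group
    have hσi : Tendsto (f i).1.σ atTop (𝓝 1) := (f i).2.2.2.2.2.2.2.1
    have hreli : ∀ n, kk n = (α ^ n) (f i).1.P * (f i).1.k n * (f i).1.σ n :=
      (f i).2.2.2.2.2.2.2.2
    filter_upwards [hσi (hO₂.mem_nhds h1O₂)] with n hn
    show ((α ^ n) vst)⁻¹ * kk n ∈ O
    have heq : ((α ^ n) vst)⁻¹ * kk n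
        = (((α ^ n) ci)⁻¹ * (f i).1.k n) * (f i).1.σ n := by
      rw [hveq, map_mul, hreli n]
      group
    rw [heq]
    apply hO₂O
    refine Set.mul_mem_mul (hCiO₂ ?_) hn
    exact ((f i).1.C).mul_mem (((f i).1.C).inv_mem
      (hpowinv _ (f i).2.2.2.1 n _ hciC)) ((f i).2.2.2.2.1 n)
  -- final assembly
  refine ⟨y * vst⁻¹, vst, ?_, fun z => (hmemK vst).mp hvstK z, by group⟩
  have hconj := conj_tendsto hVc (c := fun n => (α ^ n) vst)
    (fun n => by
      have := (hmemK vst).mp hvstK (n : ℤ)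
      rwa [zpow_apply_natCast] at this) htrack
  have heq : ∀ n, (α ^ n) (y * vst⁻¹)
      = o n * ((α ^ n) vst * (((α ^ n) vst)⁻¹ * kk n) * ((α ^ n) vst)⁻¹) := by
    intro n
    rw [map_mul, map_inv, hyok n]
    group
  have := hotend.mul hconj
  rw [mul_one] at this
  exact Tendsto.congr (fun n => (heq n).symm) this

end Ambient

end Stmt11x

open Stmt11x in
theorem stmt11 {G : Type*} [Group G] [TopologicalSpace G] [IsTopologicalGroup G]
    [LocallyCompactSpace G] [TotallyDisconnectedSpace G] [TopologicalSpace.MetrizableSpace G]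
    (α : MulAut G) (hc : Continuous α) (hc' : Continuous (α⁻¹ : MulAut G))
    (V : Subgroup G) (hVc : IsCompact (V : Set G)) (hVo : IsOpen (V : Set G))
    (Vm Vmm V0 : Set G)
    (hVm : Vm = {x : G | ∀ n : ℕ, (α ^ n) x ∈ V})
    (hVmm : Vmm = ⋃ n : ℕ, (fun x : G => (α ^ n) x) ⁻¹' Vm)
    (hV0 : V0 = {x : G | ∀ k : ℤ, (α ^ k) x ∈ V}) :
    Vmm = {x : G | Tendsto (fun n : ℕ => (α ^ n) x) atTop (𝓝 1)} * V0 := by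
  subst hVm hVmm hV0
  ext x
  simp only [Set.mem_iUnion, Set.mem_preimage, Set.mem_setOf_eq]
  constructor
  · rintro ⟨N, hN⟩
    obtain ⟨u, v, hu, hv, huv⟩ := main_lemma α hc hc' V hVc hVo ((α ^ N) x) hN
    have hx : x = (α ^ (-(N:ℤ))) u * (α ^ (-(N:ℤ))) v := by
      have h1 : (α ^ (-(N:ℤ))) ((α ^ N) x) = x := by
        rw [← zpow_apply_natCast α N x]
        exact zpow_neg_apply_zpow α N x
      rw [← map_mul, ← huv, h1]
    rw [hx]
    refine Set.mul_mem_mul ?_ ?_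
    · show Tendsto (fun n : ℕ => (α ^ n) ((α ^ (-(N:ℤ))) u)) atTop (𝓝 1)
      have hshift : Tendsto (fun n : ℕ => (α ^ (n - N)) u) atTop (𝓝 1) :=
        hu.comp (tendsto_sub_atTop_nat N)
      apply Tendsto.congr' ?_ hshift
      filter_upwards [eventually_ge_atTop N] with n hn
      rw [← zpow_apply_natCast α (n - N) u, ← zpow_apply_natCast α n, ← zpow_apply_add]
      congr 1
      push_cast [Nat.cast_sub hn]
      ring
    · show ∀ z : ℤ, (α ^ z) ((α ^ (-(N:ℤ))) v) ∈ V
      intro z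
      rw [← zpow_apply_add]
      exact hv (z + -(N:ℤ))
  · rintro ⟨u, hu, v, hv, rfl⟩
    have huT : Tendsto (fun n : ℕ => (α ^ n) u) atTop (𝓝 1) := hu
    have hev : ∀ᶠ n in atTop, (α ^ n) u ∈ (V : Set G) :=
      huT (hVo.mem_nhds V.one_mem)
    obtain ⟨N, hN⟩ := eventually_atTop.mp hev
    refine ⟨N, ?_⟩
    intro m
    show (α ^ m) ((α ^ N) (u * v)) ∈ V
    have hcollapse : ∀ w : G, (α ^ m) ((α ^ N) w) = (α ^ (m + N)) w := by
      intro w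
      rw [pow_add]
      rfl
    rw [hcollapse, map_mul]
    refine V.mul_mem (hN (m+N) (by omega)) ?_
    have := hv ((m + N : ℕ) : ℤ)
    rwa [zpow_apply_natCast] at this
end

section
/- Let α be an automorphism of a totally disconnected locally compact group G, and let V be a compact open subgroup tidy for α. Then for every closed α-stable subgroup H of P_α, one has V_- ∩ H = V ∩ H, and this group satisfies (V∩H)_- = V∩H (so V∩H is tidy for α restricted to H). -/
open Filter Topology Pointwise

theorem stmt13 {G : Type*} [Group G] [TopologicalSpace G] [IsTopologicalGroup G]
    [LocallyCompactSpace G] [TotallyDisconnectedSpace G]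
    (α : MulAut G) (hc : Continuous α) (hc' : Continuous (α⁻¹ : MulAut G))
    (V : Subgroup G) (hVc : IsCompact (V : Set G)) (hVo : IsOpen (V : Set G))
    (Vp Vm Vpp Vmm : Set G)
    (hVp : Vp = {x : G | ∀ n : ℕ, ((α⁻¹ : MulAut G) ^ n) x ∈ V})
    (hVm : Vm = {x : G | ∀ n : ℕ, (α ^ n) x ∈ V})
    (hVpp : Vpp = ⋃ n : ℕ, (fun x : G => ((α⁻¹ : MulAut G) ^ n) x) ⁻¹' Vp)
    (hVmm : Vmm = ⋃ n : ℕ, (fun x : G => (α ^ n) x) ⁻¹' Vm)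
    (tidy1 : (V : Set G) = Vp * Vm)
    (tidy2 : IsClosed Vpp ∧ IsClosed Vmm)
    (Pα : Set G)
    (hPα : Pα = {x : G | IsCompact (closure (Set.range fun n : ℕ => (α ^ n) x))})
    (H : Subgroup G) (hHc : IsClosed (H : Set G)) (hHP : (H : Set G) ⊆ Pα)
    (hHs : H.map α.toMonoidHom = H) :
    Vm ∩ H = (V : Set G) ∩ H ∧
      {x : G | ∀ n : ℕ, (α ^ n) x ∈ (V : Set G) ∩ H} = (V : Set G) ∩ H := by
  -- Hausdorffness
  have h1c : IsClosed ({1} : Set G) := by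
    have := isClosed_connectedComponent (x := (1 : G))
    rwa [connectedComponent_eq_singleton] at this
  have hT2 : T2Space G := IsTopologicalGroup.t2Space_iff_one_closed.mpr h1c
  have hVcl : IsClosed (V : Set G) := hVc.isClosed
  -- basic properties of Vp, Vm
  have hVpV : Vp ⊆ V := by
    intro y hy
    have := (hVp ▸ hy) 0
    simpa using this
  have hVmV : Vm ⊆ V := by
    intro y hy
    have := (hVm ▸ hy) 0
    simpa using this
  have hVm_mem : ∀ y ∈ Vm, ∀ n : ℕ, (α ^ n) y ∈ V := by
    intro y hy n
    rw [hVm] at hy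
    exact hy n
  have hVp_one : (1 : G) ∈ Vp := by
    rw [hVp]; intro n; simpa using V.one_mem
  have hVm_mul : ∀ y ∈ Vm, ∀ z ∈ Vm, y * z ∈ Vm := by
    intro y hy z hz
    rw [hVm]; intro n
    rw [map_mul]
    exact V.mul_mem (hVm_mem y hy n) (hVm_mem z hz n)
  have hVp_mul : ∀ y ∈ Vp, ∀ z ∈ Vp, y * z ∈ Vp := by
    intro y hy z hz
    rw [hVp]; intro n
    rw [map_mul]
    exact V.mul_mem ((hVp ▸ hy) n) ((hVp ▸ hz) n)
  have hVp_inv : ∀ y ∈ Vp, y⁻¹ ∈ Vp := by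
    intro y hy
    rw [hVp]; intro n
    rw [map_inv]
    exact V.inv_mem ((hVp ▸ hy) n)
  have hVp_ainv : ∀ y ∈ Vp, (α⁻¹ : MulAut G) y ∈ Vp := by
    intro y hy
    rw [hVp]; intro n
    have : ((α⁻¹ : MulAut G) ^ n) ((α⁻¹ : MulAut G) y)
        = ((α⁻¹ : MulAut G) ^ (n + 1)) y := by
      rw [pow_succ, MulAut.mul_apply]
    rw [this]
    exact (hVp ▸ hy) (n + 1)
  have hVp_ainvpow : ∀ k : ℕ, ∀ y ∈ Vp, ((α⁻¹ : MulAut G) ^ k) y ∈ Vp := by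
    intro k
    induction k with
    | zero => intro y hy; simpa using hy
    | succ k ih =>
      intro y hy
      have : ((α⁻¹ : MulAut G) ^ (k + 1)) y
          = ((α⁻¹ : MulAut G) ^ k) ((α⁻¹ : MulAut G) y) := by
        rw [pow_succ, MulAut.mul_apply]
      rw [this]
      exact ih _ (hVp_ainv y hy)
  -- the increasing family W n = αⁿ(Vp)
  set W : ℕ → Set G := fun n => (fun x : G => ((α⁻¹ : MulAut G) ^ n) x) ⁻¹' Vp with hW
  have hWmono : ∀ {m n : ℕ}, m ≤ n → W m ⊆ W n := by
    intro m n hmn y hy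
    obtain ⟨k, rfl⟩ := Nat.exists_eq_add_of_le hmn
    have : ((α⁻¹ : MulAut G) ^ (m + k)) y
        = ((α⁻¹ : MulAut G) ^ k) (((α⁻¹ : MulAut G) ^ m) y) := by
      rw [add_comm m k, pow_add, MulAut.mul_apply]
    show ((α⁻¹ : MulAut G) ^ (m + k)) y ∈ Vp
    rw [this]
    exact hVp_ainvpow k _ hy
  have hWVpp : ∀ n, W n ⊆ Vpp := by
    intro n y hy
    rw [hVpp]
    exact Set.mem_iUnion.2 ⟨n, hy⟩
  have hcpow : ∀ n : ℕ, Continuous fun x : G => (α ^ n) x := by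
    intro n
    induction n with
    | zero => simpa using continuous_id'
    | succ k ih =>
      have : (fun x : G => (α ^ (k + 1)) x) = fun x : G => (α ^ k) (α x) := by
        funext x; rw [pow_succ, MulAut.mul_apply]
      rw [this]
      exact ih.comp hc
  have hcpow' : ∀ n : ℕ, Continuous fun x : G => ((α⁻¹ : MulAut G) ^ n) x := by
    intro n
    induction n with
    | zero => simpa using continuous_id'
    | succ k ih =>
      have : (fun x : G => ((α⁻¹ : MulAut G) ^ (k + 1)) x)
          = fun x : G => ((α⁻¹ : MulAut G) ^ k) ((α⁻¹ : MulAut G) x) := by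
        funext x; rw [pow_succ, MulAut.mul_apply]
      rw [this]
      exact ih.comp hc'
  have hVp_closed : IsClosed Vp := by
    have : Vp = ⋂ n : ℕ, (fun x : G => ((α⁻¹ : MulAut G) ^ n) x) ⁻¹' (V : Set G) := by
      rw [hVp]; ext y; simp [Set.mem_iInter]
    rw [this]
    exact isClosed_iInter fun n => hVcl.preimage (hcpow' n)
  have hVp_compact : IsCompact Vp := hVc.of_isClosed_subset hVp_closed hVpV
  have hWimage : ∀ n : ℕ, W n = (fun x : G => (α ^ n) x) '' Vp := by
    intro n
    ext y
    constructor
    · intro hy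
      refine ⟨((α⁻¹ : MulAut G) ^ n) y, hy, ?_⟩
      show (α ^ n) (((α⁻¹ : MulAut G) ^ n) y) = y
      rw [← MulAut.mul_apply, inv_pow, mul_inv_cancel, MulAut.one_apply]
    · rintro ⟨z, hz, rfl⟩
      show ((α⁻¹ : MulAut G) ^ n) ((α ^ n) z) ∈ Vp
      rw [← MulAut.mul_apply, inv_pow, inv_mul_cancel, MulAut.one_apply]
      exact hz
  have hWcompact : ∀ n, IsCompact (W n) := by
    intro n
    rw [hWimage n]
    exact hVp_compact.image (hcpow n)
  have hWclosed : ∀ n, IsClosed (W n) := fun n => (hWcompact n).isClosed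
  have hW_mul : ∀ {m n : ℕ} {y z : G}, y ∈ W m → z ∈ W n → y * z ∈ W (max m n) := by
    intro m n y z hy hz
    have hy' : y ∈ W (max m n) := hWmono (le_max_left m n) hy
    have hz' : z ∈ W (max m n) := hWmono (le_max_right m n) hz
    show ((α⁻¹ : MulAut G) ^ max m n) (y * z) ∈ Vp
    rw [map_mul]
    exact hVp_mul _ hy' _ hz'
  have hW_inv : ∀ {n : ℕ} {y : G}, y ∈ W n → y⁻¹ ∈ W n := by
    intro n y hy
    show ((α⁻¹ : MulAut G) ^ n) y⁻¹ ∈ Vp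
    rw [map_inv]
    exact hVp_inv _ hy
  have hVpp_mem : ∀ y ∈ Vpp, ∃ n, y ∈ W n := by
    intro y hy
    rw [hVpp] at hy
    exact Set.mem_iUnion.1 hy
  have hVpp_one : (1 : G) ∈ Vpp := hWVpp 0 (by simpa [hW] using hVp_one)
  -- Baire argument: some W N has nonempty interior within Vpp
  haveI : LocallyCompactSpace ↥Vpp := tidy2.1.locallyCompactSpace
  haveI : Nonempty ↥Vpp := ⟨⟨1, hVpp_one⟩⟩
  obtain ⟨N, zz, hzz⟩ :
      ∃ n, (interior ((Subtype.val : ↥Vpp → G) ⁻¹' W n)).Nonempty := by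
    apply nonempty_interior_of_iUnion_of_closed
      (f := fun n => (Subtype.val : ↥Vpp → G) ⁻¹' W n)
    · exact fun n => (hWclosed n).preimage continuous_subtype_val
    · ext ⟨y, hy⟩
      simp only [Set.mem_iUnion, Set.mem_preimage, Set.mem_univ, iff_true]
      exact hVpp_mem y hy
  have hUex : ∃ U : Set G, IsOpen U ∧ (zz : G) ∈ U ∧ ∀ g ∈ U, g ∈ Vpp → g ∈ W N := by
    have hnh : (Subtype.val : ↥Vpp → G) ⁻¹' W N ∈ 𝓝 zz := mem_interior_iff_mem_nhds.1 hzz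
    rw [nhds_subtype] at hnh
    obtain ⟨U0, hU0, hU0sub⟩ := mem_comap.1 hnh
    obtain ⟨U, hUsub, hUopen, hzU⟩ := mem_nhds_iff.1 hU0
    refine ⟨U, hUopen, hzU, ?_⟩
    intro g hgU hgVpp
    exact hU0sub (Set.mem_preimage.2 (hUsub hgU) : (⟨g, hgVpp⟩ : ↥Vpp) ∈ _)
  obtain ⟨U, hUo, hzU, hUW⟩ := hUex
  set z : G := (zz : G) with hz
  have hzVpp : z ∈ Vpp := zz.2
  -- key claim: V ∩ H ⊆ Vm
  have key : ∀ x, x ∈ (V : Set G) ∩ (H : Set G) → x ∈ Vm := by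
    intro x hx
    have hxP : IsCompact (closure (Set.range fun n : ℕ => (α ^ n) x)) := by
      have := hHP hx.2
      rwa [hPα] at this
    obtain ⟨a, ha, b, hb, hab⟩ : ∃ a ∈ Vp, ∃ b ∈ Vm, a * b = x := by
      have : x ∈ Vp * Vm := tidy1 ▸ hx.1
      exact Set.mem_mul.1 this
    -- the forward orbit of a lies in the compact set C
    set K : Set G := closure (Set.range fun n : ℕ => (α ^ n) x) with hK
    set C : Set G := Vpp ∩ (K * (V : Set G)) with hCdef
    have hCcomp : IsCompact C := (hxP.mul hVc).inter_left tidy2.1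
    have hCVpp : C ⊆ Vpp := Set.inter_subset_left
    have horb : ∀ n : ℕ, (α ^ n) a ∈ C := by
      intro n
      constructor
      · apply hWVpp n
        show ((α⁻¹ : MulAut G) ^ n) ((α ^ n) a) ∈ Vp
        rw [← MulAut.mul_apply, inv_pow, inv_mul_cancel, MulAut.one_apply]
        exact ha
      · have hxn : (α ^ n) x ∈ K := subset_closure ⟨n, rfl⟩
        have hbn : ((α ^ n) b)⁻¹ ∈ (V : Set G) := V.inv_mem (hVm_mem b hb n)
        have : (α ^ n) a = (α ^ n) x * ((α ^ n) b)⁻¹ := by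
          rw [← hab, map_mul, mul_inv_cancel_right]
        rw [this]
        exact Set.mul_mem_mul hxn hbn
    -- cover C by translates of U; conclude C ⊆ W M for some M
    have hcover : ∀ w ∈ C, ∃ M : ℕ, ∃ O : Set G,
        IsOpen O ∧ w ∈ O ∧ ∀ w' ∈ O, w' ∈ Vpp → w' ∈ W M := by
      intro w hw
      obtain ⟨m1, hm1⟩ := hVpp_mem w (hCVpp hw)
      obtain ⟨m2, hm2⟩ := hVpp_mem z hzVpp
      refine ⟨max (max m1 m2) N, (fun g => z * (w⁻¹ * g)) ⁻¹' U, ?_, ?_, ?_⟩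
      · exact hUo.preimage (continuous_const.mul (continuous_const.mul continuous_id))
      · show z * (w⁻¹ * w) ∈ U
        rw [inv_mul_cancel, mul_one]
        exact hzU
      · intro w' hw' hw'Vpp
        obtain ⟨m3, hm3⟩ := hVpp_mem w' hw'Vpp
        have hg : z * (w⁻¹ * w') ∈ W N := by
          apply hUW _ hw'
          apply hWVpp (max m2 (max m1 m3))
          exact hW_mul hm2 (hW_mul (hW_inv hm1) hm3)
        have hwz : w * z⁻¹ ∈ W (max m1 m2) := hW_mul hm1 (hW_inv hm2)
        have : w' = (w * z⁻¹) * (z * (w⁻¹ * w')) := by group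
        rw [this]
        exact hW_mul hwz hg
    choose! M O hOopen hOmem hOsub using hcover
    obtain ⟨t, htC, htcover⟩ := hCcomp.elim_nhds_subcover O
      (fun w hw => (hOopen w hw).mem_nhds (hOmem w hw))
    set Mx : ℕ := t.sup M with hMx
    have hCW : C ⊆ W Mx := by
      intro c hcC
      obtain ⟨w, hwt, hcw⟩ := Set.mem_iUnion₂.1 (htcover hcC)
      have hwC : w ∈ C := htC w hwt
      have : c ∈ W (M w) := hOsub w hwC c hcw (hCVpp hcC)
      exact hWmono (Finset.le_sup hwt) this
    -- deduce a ∈ Vm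
    have haVm : a ∈ Vm := by
      rw [hVm]
      intro m
      have h1 : (α ^ (Mx + m)) a ∈ W Mx := hCW (horb (Mx + m))
      have h2 : ((α⁻¹ : MulAut G) ^ Mx) ((α ^ (Mx + m)) a) = (α ^ m) a := by
        rw [← MulAut.mul_apply, inv_pow, pow_add, inv_mul_cancel_left]
      have : (α ^ m) a ∈ Vp := by rw [← h2]; exact h1
      exact hVpV this
    have : x ∈ Vm := by
      rw [← hab]
      exact hVm_mul a haVm b hb
    exact this
  -- H is α-invariant
  have hHinv : ∀ y ∈ (H : Set G), ∀ n : ℕ, (α ^ n) y ∈ (H : Set G) := by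
    intro y hy n
    induction n with
    | zero => simpa using hy
    | succ k ih =>
      have : (α ^ (k + 1)) y = α ((α ^ k) y) := by
        rw [pow_succ', MulAut.mul_apply]
      rw [this]
      have : α ((α ^ k) y) ∈ H.map α.toMonoidHom := ⟨(α ^ k) y, ih, rfl⟩
      rwa [hHs] at this
  constructor
  · apply Set.Subset.antisymm
    · exact Set.inter_subset_inter_left _ hVmV
    · intro x hx
      exact ⟨key x hx, hx.2⟩
  · apply Set.Subset.antisymm
    · intro x hx
      have := hx 0
      simpa using this
    · intro x hx n
      exact ⟨hVm_mem x (key x hx) n, hHinv x hx.2 n⟩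
end

section
/- Let H be a totally disconnected locally compact group, α an automorphism, V a compact open subgroup with V = V_-, i.e. V = ⋂_{n≥0} α^{-n}(V), and N a closed normal α-stable subgroup of H. Then the image q(V) in H/N satisfies q(V)_- = q(V), where q : H → H/N is the quotient map and q(V)_- is taken with respect to the induced automorphism ᾱ of H/N. -/
open Filter Topology Pointwise

theorem stmt14 {H : Type*} [Group H] [TopologicalSpace H] [IsTopologicalGroup H]
    [LocallyCompactSpace H] [TotallyDisconnectedSpace H]
    (α : MulAut H) (hc : Continuous α) (hc' : Continuous (α⁻¹ : MulAut H))
    (V : Subgroup H) (hVc : IsCompact (V : Set H)) (hVo : IsOpen (V : Set H))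
    (hV : (V : Set H) = {x : H | ∀ n : ℕ, (α ^ n) x ∈ V})
    (N : Subgroup H) [N.Normal] (hNc : IsClosed (N : Set H))
    (hNs : N.map α.toMonoidHom = N)
    (β : MulAut (H ⧸ N)) (hβ : ∀ x : H, β (QuotientGroup.mk x) = QuotientGroup.mk (α x)) :
    {y : H ⧸ N | ∀ n : ℕ, (β ^ n) y ∈ (QuotientGroup.mk : H → H ⧸ N) '' (V : Set H)}
      = (QuotientGroup.mk : H → H ⧸ N) '' (V : Set H) := by
  have hβn : ∀ (n : ℕ) (x : H), (β ^ n) (QuotientGroup.mk x) = QuotientGroup.mk ((α ^ n) x) := by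
    intro n
    induction n with
    | zero => intro x; simp
    | succ n ih =>
      intro x
      rw [pow_succ, pow_succ]
      simp only [MulAut.mul_apply]
      rw [hβ x, ih (α x)]
  ext y
  constructor
  · intro hy
    have := hy 0
    simpa using this
  · rintro ⟨v, hv, rfl⟩ n
    rw [hβn n v]
    exact ⟨(α ^ n) v, by have := (hV ▸ hv : v ∈ {x : H | ∀ n : ℕ, (α ^ n) x ∈ V}) n; exact this, rfl⟩
end

section
/- Let V be a compact open subgroup tidy for the automorphism α of a totally disconnected locally compact group. Then V_{++} ∩ V_{--} = V_0. -/
open Filter Topology Pointwise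

private lemma mulaut_pow_continuous {G : Type*} [Group G] [TopologicalSpace G]
    (β : MulAut G) (hβ : Continuous β) (n : ℕ) : Continuous ⇑(β ^ n : MulAut G) := by
  induction n with
  | zero =>
    have h : ⇑(β ^ 0 : MulAut G) = id := by funext x; simp
    rw [h]; exact continuous_id
  | succ n ih =>
    have h : ⇑(β ^ (n + 1) : MulAut G) = ⇑(β ^ n : MulAut G) ∘ ⇑β := by
      funext x; simp [pow_succ]
    rw [h]; exact ih.comp hβ

private lemma mulaut_zpow_continuous {G : Type*} [Group G] [TopologicalSpace G]
    (α : MulAut G) (hc : Continuous α) (hc' : Continuous (α⁻¹ : MulAut G)) (j : ℤ) :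
    Continuous ⇑(α ^ j : MulAut G) := by
  rcases Int.eq_nat_or_neg j with ⟨n, rfl | rfl⟩
  · rw [zpow_natCast]; exact mulaut_pow_continuous α hc n
  · rw [zpow_neg, zpow_natCast, ← inv_pow]; exact mulaut_pow_continuous _ hc' n

/-- Stabilization: a compact subgroup which is an increasing countable union of
closed subgroups equals one of them. -/
private lemma stab {G : Type*} [Group G] [TopologicalSpace G] [IsTopologicalGroup G] [T2Space G]
    (D : Subgroup G) (hDc : IsCompact (D : Set G))
    (K : ℕ → Subgroup G) (hKc : ∀ n, IsClosed (K n : Set G))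
    (hKmono : ∀ {m n : ℕ}, m ≤ n → (K m : Set G) ⊆ K n)
    (hcover : (D : Set G) ⊆ ⋃ n, (K n : Set G)) :
    ∃ M, (D : Set G) ⊆ K M := by
  haveI : CompactSpace ↥(D : Set G) := isCompact_iff_compactSpace.mp hDc
  haveI : Nonempty ↥(D : Set G) := ⟨⟨1, D.one_mem⟩⟩
  obtain ⟨N, xN, hxN⟩ :=
    nonempty_interior_of_iUnion_of_closed
      (f := fun n => ((↑) : ↥(D : Set G) → G) ⁻¹' (K n : Set G))
      (fun n => (hKc n).preimage continuous_subtype_val)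
      (by
        ext y
        simp only [Set.mem_iUnion, Set.mem_preimage, Set.mem_univ, iff_true]
        have := hcover y.2
        simpa using this)
  rw [mem_interior_iff_mem_nhds, nhds_induced, Filter.mem_comap] at hxN
  obtain ⟨U0, hU0, hU0sub⟩ := hxN
  obtain ⟨U, hUsub, hUopen, hdU⟩ := mem_nhds_iff.mp hU0
  set d : G := (xN : G) with hd
  have hdD : d ∈ (D : Set G) := xN.2
  have hdU0 : d ∈ U0 := mem_of_mem_nhds hU0
  have hdKN : d ∈ K N := hU0sub hdU0
  have hUK : ∀ y, y ∈ (D : Set G) → y ∈ U → y ∈ K N := by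
    intro y hyD hyU
    exact hU0sub (show (⟨y, hyD⟩ : ↥(D : Set G)) ∈ _ from hUsub hyU)
  -- W: open neighbourhood of 1 whose D-points lie in K N
  set W : Set G := (fun w => d * w) ⁻¹' U with hW
  have hWopen : IsOpen W := hUopen.preimage (continuous_mul_left d)
  have h1W : (1 : G) ∈ W := by simpa [hW] using hdU
  have hWK : ∀ w, w ∈ (D : Set G) → w ∈ W → w ∈ K N := by
    intro w hwD hwW
    have hdw : d * w ∈ (D : Set G) := D.mul_mem hdD hwD
    have h1 : d * w ∈ K N := hUK _ hdw hwW
    have := (K N).mul_mem ((K N).inv_mem hdKN) h1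
    simpa using this
  -- finite subcover by translates of W
  have hopen : ∀ g : ↥(D : Set G), IsOpen ((fun y => (g : G)⁻¹ * y) ⁻¹' W) :=
    fun g => hWopen.preimage (continuous_mul_left _)
  have hcov : (D : Set G) ⊆ ⋃ g : ↥(D : Set G), (fun y => (g : G)⁻¹ * y) ⁻¹' W := by
    intro y hy
    exact Set.mem_iUnion.mpr ⟨⟨y, hy⟩, by simpa using h1W⟩
  obtain ⟨t, ht⟩ := hDc.elim_finite_subcover _ hopen hcov
  have hchoice : ∀ g : ↥(D : Set G), ∃ n, (g : G) ∈ K n := by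
    intro g
    have := hcover g.2
    simpa using this
  choose nn hnn using hchoice
  refine ⟨max N (t.sup nn), ?_⟩
  intro y hy
  obtain ⟨g, hgt, hyg⟩ := Set.mem_iUnion₂.mp (ht hy)
  have hwD : (g : G)⁻¹ * y ∈ (D : Set G) := D.mul_mem (D.inv_mem g.2) hy
  have hwKN : (g : G)⁻¹ * y ∈ K N := hWK _ hwD hyg
  have hwKM : (g : G)⁻¹ * y ∈ K (max N (t.sup nn)) :=
    hKmono (le_max_left _ _) hwKN
  have hgKM : (g : G) ∈ K (max N (t.sup nn)) :=
    hKmono (le_trans (Finset.le_sup hgt) (le_max_right _ _)) (hnn g)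
  have := (K _).mul_mem hgKM hwKM
  simpa using this

theorem stmt16 {G : Type*} [Group G] [TopologicalSpace G] [IsTopologicalGroup G]
    [LocallyCompactSpace G] [TotallyDisconnectedSpace G]
    (α : MulAut G) (hc : Continuous α) (hc' : Continuous (α⁻¹ : MulAut G))
    (V : Subgroup G) (hVc : IsCompact (V : Set G)) (hVo : IsOpen (V : Set G))
    (Vp Vm Vpp Vmm V0 : Set G)
    (hVp : Vp = {x : G | ∀ n : ℕ, ((α⁻¹ : MulAut G) ^ n) x ∈ V})
    (hVm : Vm = {x : G | ∀ n : ℕ, (α ^ n) x ∈ V})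
    (hVpp : Vpp = ⋃ n : ℕ, (fun x : G => ((α⁻¹ : MulAut G) ^ n) x) ⁻¹' Vp)
    (hVmm : Vmm = ⋃ n : ℕ, (fun x : G => (α ^ n) x) ⁻¹' Vm)
    (hV0 : V0 = Vp ∩ Vm)
    (tidy1 : (V : Set G) = Vp * Vm)
    (tidy2 : IsClosed Vpp ∧ IsClosed Vmm) :
    Vpp ∩ Vmm = V0 := by
  -- separation
  haveI : T1Space G := ⟨fun x => by
    rw [← totallyDisconnectedSpace_iff_connectedComponent_singleton.mp ‹_› x]
    exact isClosed_connectedComponent⟩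
  haveI : T2Space G := inferInstance
  -- basic zpow manipulation facts
  have hneg : ∀ (n : ℕ) (x : G), ((α⁻¹ : MulAut G) ^ n) x = (α ^ (-(n : ℤ)) : MulAut G) x := by
    intro n x; rw [zpow_neg, zpow_natCast, ← inv_pow]
  have hpos : ∀ (n : ℕ) (x : G), ((α : MulAut G) ^ n) x = (α ^ (n : ℤ) : MulAut G) x := by
    intro n x; rw [zpow_natCast]
  have hadd : ∀ (i j : ℤ) (x : G),
      (α ^ i : MulAut G) ((α ^ j : MulAut G) x) = (α ^ (i + j) : MulAut G) x := by
    intro i j x; rw [zpow_add]; rfl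
  -- characterizations in terms of ℤ-powers
  have memVp : ∀ x : G, x ∈ Vp ↔ ∀ j : ℤ, j ≤ 0 → (α ^ j : MulAut G) x ∈ V := by
    intro x
    rw [hVp]
    constructor
    · intro h j hj
      obtain ⟨n, hn⟩ := Int.eq_ofNat_of_zero_le (neg_nonneg.mpr hj)
      have hj' : j = -(n : ℤ) := by omega
      rw [hj', ← hneg]; exact h n
    · intro h n
      rw [hneg]; exact h _ (by simp)
  have memVm : ∀ x : G, x ∈ Vm ↔ ∀ j : ℤ, 0 ≤ j → (α ^ j : MulAut G) x ∈ V := by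
    intro x
    rw [hVm]
    constructor
    · intro h j hj
      obtain ⟨n, rfl⟩ := Int.eq_ofNat_of_zero_le hj
      rw [← hpos]; exact h n
    · intro h n
      rw [hpos]; exact h _ (by simp)
  have memVpp : ∀ x : G, x ∈ Vpp ↔
      ∃ n : ℕ, ∀ j : ℤ, j ≤ -(n : ℤ) → (α ^ j : MulAut G) x ∈ V := by
    intro x
    rw [hVpp]
    simp only [Set.mem_iUnion, Set.mem_preimage]
    constructor
    · rintro ⟨n, hn⟩
      refine ⟨n, fun j hj => ?_⟩
      rw [memVp] at hn
      have h2 := hn (j + n) (by omega)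
      rw [hneg, hadd] at h2
      simpa using h2
    · rintro ⟨n, hn⟩
      refine ⟨n, (memVp _).mpr fun j hj => ?_⟩
      rw [hneg, hadd]
      exact hn _ (by omega)
  have memVmm : ∀ x : G, x ∈ Vmm ↔
      ∃ n : ℕ, ∀ j : ℤ, (n : ℤ) ≤ j → (α ^ j : MulAut G) x ∈ V := by
    intro x
    rw [hVmm]
    simp only [Set.mem_iUnion, Set.mem_preimage]
    constructor
    · rintro ⟨n, hn⟩
      refine ⟨n, fun j hj => ?_⟩
      rw [memVm] at hn
      have h2 := hn (j - n) (by omega)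
      rw [hpos, hadd] at h2
      simpa using h2
    · rintro ⟨n, hn⟩
      refine ⟨n, (memVm _).mpr fun j hj => ?_⟩
      rw [hpos, hadd]
      exact hn _ (by omega)
  -- the subgroups K n
  set K : ℕ → Subgroup G := fun n =>
    { carrier := {g : G | ∀ j : ℤ, (j ≤ 0 ∨ (n : ℤ) ≤ j) → (α ^ j : MulAut G) g ∈ V}
      one_mem' := by intro j _; simpa using V.one_mem
      mul_mem' := by
        intro a b ha hb j hj
        have := V.mul_mem (ha j hj) (hb j hj)
        simpa [map_mul] using this
      inv_mem' := by
        intro a ha j hj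
        have := V.inv_mem (ha j hj)
        simpa [map_inv] using this } with hK
  have memK : ∀ (n : ℕ) (g : G),
      g ∈ K n ↔ ∀ j : ℤ, (j ≤ 0 ∨ (n : ℤ) ≤ j) → (α ^ j : MulAut G) g ∈ V := by
    intro n g; rfl
  have hKmono : ∀ {m n : ℕ}, m ≤ n → (K m : Set G) ⊆ (K n : Set G) := by
    intro m n hmn g hg j hj
    exact hg j (by omega)
  -- closedness of K n
  have hVclosed : IsClosed (V : Set G) := hVc.isClosed
  have hKclosed : ∀ n, IsClosed (K n : Set G) := by
    intro n
    have : (K n : Set G) =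
        ⋂ j : ℤ, ⋂ _ : (j ≤ 0 ∨ (n : ℤ) ≤ j), (⇑(α ^ j : MulAut G)) ⁻¹' (V : Set G) := by
      ext g
      simp [memK]
    rw [this]
    exact isClosed_iInter fun j => isClosed_iInter fun _ =>
      hVclosed.preimage (mulaut_zpow_continuous α hc hc' j)
  -- the subgroup D = Vp ∩ Vmm
  set D : Subgroup G :=
    { carrier := Vp ∩ Vmm
      one_mem' := by
        constructor
        · rw [memVp]; intro j _; simpa using V.one_mem
        · rw [memVmm]; exact ⟨0, fun j _ => by simpa using V.one_mem⟩
      mul_mem' := by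
        rintro a b ⟨haP, haM⟩ ⟨hbP, hbM⟩
        rw [memVp] at haP hbP
        rw [memVmm] at haM hbM
        obtain ⟨na, hna⟩ := haM
        obtain ⟨nb, hnb⟩ := hbM
        constructor
        · rw [memVp]
          intro j hj
          have := V.mul_mem (haP j hj) (hbP j hj)
          simpa [map_mul] using this
        · rw [memVmm]
          refine ⟨max na nb, fun j hj => ?_⟩
          have h1 := hna j (le_trans (by exact_mod_cast le_max_left na nb) hj)
          have h2 := hnb j (le_trans (by exact_mod_cast le_max_right na nb) hj)
          have := V.mul_mem h1 h2
          simpa [map_mul] using this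
      inv_mem' := by
        rintro a ⟨haP, haM⟩
        rw [memVp] at haP
        rw [memVmm] at haM
        obtain ⟨na, hna⟩ := haM
        constructor
        · rw [memVp]
          intro j hj
          have := V.inv_mem (haP j hj)
          simpa [map_inv] using this
        · rw [memVmm]
          refine ⟨na, fun j hj => ?_⟩
          have := V.inv_mem (hna j hj)
          simpa [map_inv] using this } with hD
  have hDcarrier : (D : Set G) = Vp ∩ Vmm := rfl
  -- D is compact
  have hVpsubV : Vp ⊆ (V : Set G) := by
    intro x hx
    have := (memVp x).mp hx 0 le_rfl
    simpa using this
  have hVpclosed : IsClosed Vp := by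
    have : Vp = ⋂ n : ℕ, (⇑((α⁻¹ : MulAut G) ^ n)) ⁻¹' (V : Set G) := by
      ext x; rw [hVp]; simp [Set.mem_iInter]
    rw [this]
    exact isClosed_iInter fun n =>
      hVclosed.preimage (mulaut_pow_continuous _ hc' n)
  have hDcompact : IsCompact (D : Set G) := by
    rw [hDcarrier]
    exact hVc.of_isClosed_subset (hVpclosed.inter tidy2.2)
      (fun x hx => hVpsubV hx.1)
  -- cover of D by the K n and K n ⊆ D
  have hKsubD : ∀ n, (K n : Set G) ⊆ (D : Set G) := by
    intro n g hg
    have hg := (memK n g).mp hg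
    rw [hDcarrier]
    constructor
    · rw [memVp]; exact fun j hj => hg j (Or.inl hj)
    · rw [memVmm]; exact ⟨n, fun j hj => hg j (Or.inr hj)⟩
  have hcover : (D : Set G) ⊆ ⋃ n, (K n : Set G) := by
    intro g hg
    rw [hDcarrier] at hg
    obtain ⟨hgP, hgM⟩ := hg
    rw [memVp] at hgP
    rw [memVmm] at hgM
    obtain ⟨n, hn⟩ := hgM
    exact Set.mem_iUnion.mpr ⟨n, fun j hj => hj.elim (hgP j) (hn j)⟩
  obtain ⟨M, hM⟩ := stab D hDcompact K hKclosed hKmono hcover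
  -- descent
  have hdesc : ∀ m : ℕ, ((K (m + 2) : Set G) ⊆ K (m + 1)) → ((K (m + 1) : Set G) ⊆ K m) := by
    intro m hstep g hg
    have hg := (memK _ g).mp hg
    refine (memK _ g).mpr ?_
    set g' : G := (α ^ (-1 : ℤ) : MulAut G) g with hg'
    have hg'mem : g' ∈ K (m + 2) := by
      rw [memK]
      intro j hj
      rw [hg', hadd]
      exact hg (j + -1) (by omega)
    have hg'mem' : g' ∈ K (m + 1) := hstep hg'mem
    have hmid : (α ^ (m : ℤ) : MulAut G) g ∈ V := by
      have := (memK _ _).mp hg'mem' ((m : ℤ) + 1) (Or.inr (by omega))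
      rw [hg', hadd] at this
      simpa using this
    intro j hj
    rcases hj with hj | hj
    · exact hg j (Or.inl hj)
    · rcases eq_or_lt_of_le hj with heq | hlt
      · rw [← heq]; exact hmid
      · exact hg j (Or.inr (by omega))
  -- all consecutive inclusions hold
  have hbase : ∀ m : ℕ, M ≤ m → (K (m + 1) : Set G) ⊆ K m := by
    intro m hMm g hg
    exact hKmono hMm (hM (hKsubD _ hg))
  have hauxdown : ∀ i : ℕ, (K (M - i + 1) : Set G) ⊆ K (M - i) := by
    intro i
    induction i with
    | zero => exact hbase M le_rfl
    | succ i ih =>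
      rcases le_or_gt M i with h | h
      · have h1 : M - (i + 1) = 0 := by omega
        have h2 : M - i = 0 := by omega
        rw [h1]; rw [h2] at ih; exact ih
      · have h1 : M - i = (M - (i + 1)) + 1 := by omega
        rw [h1] at ih
        exact hdesc _ ih
  have hconsec : ∀ m : ℕ, (K (m + 1) : Set G) ⊆ K m := by
    intro m
    rcases le_or_gt M m with h | h
    · exact hbase m h
    · have heq : M - (M - m) = m := by omega
      have h2 := hauxdown (M - m)
      rwa [heq] at h2
  have hK0 : ∀ n : ℕ, (K n : Set G) ⊆ K 0 := by
    intro n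
    induction n with
    | zero => exact fun g h => h
    | succ n ih => exact fun g hg => ih (hconsec n hg)
  -- finish
  ext x
  rw [hV0]
  constructor
  · rintro ⟨hxpp, hxmm⟩
    obtain ⟨a, ha⟩ := (memVpp x).mp hxpp
    obtain ⟨b, hb⟩ := (memVmm x).mp hxmm
    set g : G := (α ^ (-(a : ℤ)) : MulAut G) x with hgdef
    have hgK : g ∈ K (a + b) := by
      rw [memK]
      intro j hj
      rw [hgdef, hadd]
      rcases hj with hj | hj
      · exact ha _ (by omega)
      · refine hb _ ?_
        push_cast at hj ⊢
        omega
    have hgK0 : g ∈ K 0 := hK0 _ hgK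
    rw [memK] at hgK0
    have hxj : ∀ j : ℤ, (α ^ j : MulAut G) x ∈ V := by
      intro j
      have h := hgK0 (j + a) (by push_cast; omega)
      rw [hgdef, hadd] at h
      have heq : (j + (a : ℤ)) + (-(a : ℤ)) = j := by ring
      rwa [heq] at h
    exact ⟨(memVp x).mpr fun j _ => hxj j, (memVm x).mpr fun j _ => hxj j⟩
  · rintro ⟨hxp, hxm⟩
    constructor
    · rw [hVpp]
      refine Set.mem_iUnion.mpr ⟨0, ?_⟩
      simpa using hxp
    · rw [hVmm]
      refine Set.mem_iUnion.mpr ⟨0, ?_⟩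
      simpa using hxm
end
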